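/- arXiv:1402.1092 — 3 statements merged into one kernel-verified Lean document; each statement's English description precedes it below -/
import Mathlib

section
/- Let {w_k}_{k∈ℕ₀} be the Walsh functions on [0,1] and define θ̂_k(ω) = w_k((ω+π)/(2π)) for −π ≤ ω < π, so that {θ̂_k}_{k∈ℕ₀} is a complete orthonormal system in L²[−π,π]. For f ∈ PW¹_π and t ∈ ℝ set c_k(f,t) = (1/(2π)) ∫_{−π}^{π} f̂(ω) θ̂_k(ω) e^{iωt} dω. Then for all f ∈ PW¹_π and all ĥ_T ∈ L^∞[−π,π], with (Tf)(t) = (1/(2π)) ∫_{−π}^{π} f̂(ω) ĥ_T(ω) e^{iωt} dω and (Tθ_k)(0) = (1/(2π)) ∫_{−π}^{π} ĥ_T(ω) θ̂_k(ω) dω, we have lim_{N→∞} sup_{t∈ℝ} | (Tf)(t) − Σ_{k=0}^{2^N} c_k(f,t) (Tθ_k)(0) | = 0. -/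
/-!
The first `2^N` Walsh functions are an orthogonal basis of the step functions on the `2^N`
dyadic cells of `[-π, π]`, so `∑_{k<2^N} c_k(f,t) (Tθ_k)(0) = (1/2π) ∫ f̂ (E_N ĥ_T) e^{iωt}`,
where `E_N ĥ_T` averages `ĥ_T` over the cell containing `ω`. The remaining term `k = 2^N` is
controlled because `θ_{2^N} = r_N` is orthogonal to `E_N ĥ_T`, so that `(Tθ_{2^N})(0)` only sees
`ĥ_T - E_N ĥ_T`. Both errors are bounded, uniformly in `t`, by integrals of
`‖f̂‖ · |E_N ĥ_T - ĥ_T|` and `|E_N ĥ_T - ĥ_T|`, which tend to `0` by dominated convergence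
(`ĥ_T` is bounded) and Lebesgue's differentiation theorem along dyadic cells.
-/

open MeasureTheory Filter Finset

/-- The `i`-th Rademacher function on `[0,1)`: `r_i(x) = (-1)^{⌊2^{i+1} x⌋}`. -/
noncomputable def rademacher (i : ℕ) (x : ℝ) : ℝ :=
  (-1 : ℝ) ^ (⌊x * 2 ^ (i + 1)⌋)

/-- The `k`-th Walsh function (Walsh–Paley ordering) on `[0,1)`:
`w_k = ∏_i r_i^{k_i}` where `k = ∑_i k_i 2^i` is the binary expansion of `k`.
(All set bits of `k` have index `< k`, so the product below suffices.) -/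
noncomputable def walsh (k : ℕ) (x : ℝ) : ℝ :=
  ∏ i ∈ Finset.range k, if Nat.testBit k i then rademacher i x else 1

/-- `θ̂_k(ω) = w_k((ω+π)/(2π))`, the Walsh system transplanted to `[-π,π)`. -/
noncomputable def walshTheta (k : ℕ) (ω : ℝ) : ℝ :=
  walsh k ((ω + Real.pi) / (2 * Real.pi))

lemma sum_range_two_mul_eq_zero {M : Type*} [AddCommGroup M] {f : ℕ → M}
    (hf : ∀ j, f (2 * j + 1) = -f (2 * j)) (n : ℕ) : ∑ m ∈ range (2 * n), f m = 0 := by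
  induction n with
  | zero => simp
  | succ n ih => rw [show 2 * (n + 1) = 2 * n + 1 + 1 by ring, sum_range_succ, sum_range_succ, ih,
      hf, zero_add, add_neg_cancel]

lemma sum_mul_sum_eq_of_orthogonal {ι κ R : Type*} [CommSemiring R] [DecidableEq ι]
    {s : Finset ι} {t : Finset κ} {M : R} (e : κ → ι → R)
    (he : ∀ j ∈ s, ∀ j' ∈ s, ∑ k ∈ t, e k j * e k j' = if j = j' then M else 0) (P Q : ι → R) :
    ∑ k ∈ t, (∑ j ∈ s, e k j * P j) * (∑ j ∈ s, e k j * Q j) = M * ∑ j ∈ s, P j * Q j := by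
  calc ∑ k ∈ t, (∑ j ∈ s, e k j * P j) * (∑ j ∈ s, e k j * Q j)
      = ∑ j ∈ s, ∑ j' ∈ s, (∑ k ∈ t, e k j * e k j') * (P j * Q j') := by
        simp_rw [sum_mul_sum, sum_mul]
        rw [sum_comm]
        refine sum_congr rfl fun j _ ↦ ?_
        rw [sum_comm]
        exact sum_congr rfl fun j' _ ↦ sum_congr rfl fun k _ ↦ by ring
    _ = ∑ j ∈ s, M * (P j * Q j) := sum_congr rfl fun j hj ↦ by
        rw [sum_congr rfl fun j' hj' ↦ congrArg (· * (P j * Q j')) (he j hj j' hj')]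
        simp_rw [ite_mul, zero_mul]
        rw [sum_ite_eq, if_pos hj]
    _ = M * ∑ j ∈ s, P j * Q j := (mul_sum _ _ _).symm

lemma rademacher_eq_one_or_eq_neg_one (i : ℕ) (x : ℝ) :
    rademacher i x = 1 ∨ rademacher i x = -1 := by
  rcases Int.even_or_odd ⌊x * 2 ^ (i + 1)⌋ with h | h
  · exact .inl h.neg_one_zpow
  · exact .inr h.neg_one_zpow

lemma natFloor_mul_two_pow_eq_div (x : ℝ) {n N : ℕ} (h : n ≤ N) :
    ⌊x * 2 ^ n⌋₊ = ⌊x * 2 ^ N⌋₊ / 2 ^ (N - n) := by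
  have hN : (2 : ℝ) ^ N = 2 ^ n * 2 ^ (N - n) := by rw [← pow_add, Nat.add_sub_cancel' h]
  rw [← Nat.floor_div_natCast, Nat.cast_pow, Nat.cast_ofNat, hN]
  field_simp

/-- `r_0, …, r_{N-1}` read off the binary digits of `⌊2^N x⌋`, most significant first. -/
lemma rademacher_eq_ite_testBit {x : ℝ} (hx : 0 ≤ x) {i N : ℕ} (h : i < N) :
    rademacher i x = if (⌊x * 2 ^ N⌋₊).testBit (N - (i + 1)) then -1 else 1 := by
  rw [rademacher, ← Int.natCast_floor_eq_floor (by positivity), zpow_natCast,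
    natFloor_mul_two_pow_eq_div x (Nat.succ_le_of_lt h), Nat.testBit_eq_decide_div_mod_eq]
  rcases Nat.even_or_odd (⌊x * 2 ^ N⌋₊ / 2 ^ (N - (i + 1))) with h | h
  · simp [h.neg_one_pow, Nat.even_iff.1 h]
  · simp [h.neg_one_pow, Nat.odd_iff.1 h]

lemma rademacher_eq_of_natFloor_eq {x y : ℝ} (hx : 0 ≤ x) (hy : 0 ≤ y) {i N : ℕ} (h : i < N)
    (hxy : ⌊x * 2 ^ N⌋₊ = ⌊y * 2 ^ N⌋₊) : rademacher i x = rademacher i y := by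
  rw [rademacher_eq_ite_testBit hx h, rademacher_eq_ite_testBit hy h, hxy]

lemma exists_rademacher_mul_eq_neg_one {x y : ℝ} (hx : 0 ≤ x) (hy : 0 ≤ y) {N : ℕ}
    (hxN : ⌊x * 2 ^ N⌋₊ < 2 ^ N) (hyN : ⌊y * 2 ^ N⌋₊ < 2 ^ N)
    (hxy : ⌊x * 2 ^ N⌋₊ ≠ ⌊y * 2 ^ N⌋₊) :
    ∃ i < N, rademacher i x * rademacher i y = -1 := by
  obtain ⟨j, hj⟩ : ∃ j, (⌊x * 2 ^ N⌋₊).testBit j ≠ (⌊y * 2 ^ N⌋₊).testBit j := by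
    by_contra! h
    exact hxy (Nat.eq_of_testBit_eq h)
  have hjN : j < N := by
    by_contra! hNj
    have hpow : 2 ^ N ≤ 2 ^ j := Nat.pow_le_pow_right two_pos hNj
    rw [Nat.testBit_lt_two_pow (hxN.trans_le hpow), Nat.testBit_lt_two_pow (hyN.trans_le hpow)]
      at hj
    exact hj rfl
  have hi : N - (j + 1) < N := by omega
  refine ⟨N - (j + 1), hi, ?_⟩
  rw [rademacher_eq_ite_testBit hx hi, rademacher_eq_ite_testBit hy hi,
    show N - (N - (j + 1) + 1) = j by omega]
  revert hj
  cases (⌊x * 2 ^ N⌋₊).testBit j <;> cases (⌊y * 2 ^ N⌋₊).testBit j <;> norm_num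

lemma walsh_eq_prod_range {k M : ℕ} (hk : k < 2 ^ M) (x : ℝ) :
    walsh k x = ∏ i ∈ range M, if k.testBit i then rademacher i x else 1 := by
  have hmin : ∀ A, min k M ≤ A → ∏ i ∈ range A, (if k.testBit i then rademacher i x else 1) =
      ∏ i ∈ range (min k M), if k.testBit i then rademacher i x else 1 := by
    refine fun A hA ↦ (prod_subset (range_subset_range.2 hA) fun i _ hi ↦ ?_).symm
    have hki : k < 2 ^ i := by
      rcases min_le_iff.1 (not_lt.1 (mem_range.not.1 hi)) with h | h
      · exact k.lt_two_pow_self.trans_le (Nat.pow_le_pow_right two_pos h)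
      · exact hk.trans_le (Nat.pow_le_pow_right two_pos h)
    rw [Nat.testBit_lt_two_pow hki, if_neg Bool.false_ne_true]
  rw [walsh, hmin k (min_le_left _ _), hmin M (min_le_right _ _)]

lemma walsh_zero (x : ℝ) : walsh 0 x = 1 := by simp [walsh]

lemma walsh_two_pow_add {k N : ℕ} (hk : k < 2 ^ N) (x : ℝ) :
    walsh (2 ^ N + k) x = rademacher N x * walsh k x := by
  have hk' : 2 ^ N + k < 2 ^ (N + 1) := by rw [pow_succ]; omega
  rw [walsh_eq_prod_range hk' x, walsh_eq_prod_range hk x, prod_range_succ,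
    Nat.testBit_two_pow_add_eq, Nat.testBit_lt_two_pow hk, Bool.not_false, if_pos rfl, mul_comm]
  congr 1
  exact prod_congr rfl fun i hi ↦ by rw [Nat.testBit_two_pow_add_gt (mem_range.1 hi)]

lemma abs_walsh (k : ℕ) (x : ℝ) : |walsh k x| = 1 := by
  rw [walsh, abs_prod]
  refine prod_eq_one fun i _ ↦ ?_
  split_ifs
  · rcases rademacher_eq_one_or_eq_neg_one i x with h | h <;> simp [h]
  · exact abs_one

lemma sum_walsh_mul_walsh (N : ℕ) (x y : ℝ) :
    ∑ k ∈ range (2 ^ N), walsh k x * walsh k y =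
      ∏ i ∈ range N, (1 + rademacher i x * rademacher i y) := by
  induction N with
  | zero => simp [walsh_zero]
  | succ N ih =>
    rw [prod_range_succ, ← ih, pow_succ, mul_two, sum_range_add, mul_add, mul_one, sum_mul]
    congr 1
    refine sum_congr rfl fun k hk ↦ ?_
    rw [walsh_two_pow_add (mem_range.1 hk), walsh_two_pow_add (mem_range.1 hk)]
    ring

lemma sum_walsh_mul_walsh_eq_ite {N : ℕ} {x y : ℝ} (hx : 0 ≤ x) (hy : 0 ≤ y)
    (hxN : ⌊x * 2 ^ N⌋₊ < 2 ^ N) (hyN : ⌊y * 2 ^ N⌋₊ < 2 ^ N) :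
    ∑ k ∈ range (2 ^ N), walsh k x * walsh k y =
      if ⌊x * 2 ^ N⌋₊ = ⌊y * 2 ^ N⌋₊ then 2 ^ N else 0 := by
  rw [sum_walsh_mul_walsh]
  split_ifs with hxy
  · calc ∏ i ∈ range N, (1 + rademacher i x * rademacher i y)
        _ = ∏ _i ∈ range N, (2 : ℝ) := prod_congr rfl fun i hi ↦ by
          rw [rademacher_eq_of_natFloor_eq hx hy (mem_range.1 hi) hxy]
          rcases rademacher_eq_one_or_eq_neg_one i y with h | h <;> norm_num [h]
        _ = 2 ^ N := by rw [prod_const, card_range]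
  · obtain ⟨i, hiN, hi⟩ := exists_rademacher_mul_eq_neg_one hx hy hxN hyN hxy
    exact prod_eq_zero (mem_range.2 hiN) (by rw [hi]; norm_num)

lemma walsh_eq_of_natFloor_eq {x y : ℝ} (hx : 0 ≤ x) (hy : 0 ≤ y) {k N : ℕ} (hk : k < 2 ^ N)
    (hxy : ⌊x * 2 ^ N⌋₊ = ⌊y * 2 ^ N⌋₊) : walsh k x = walsh k y := by
  rw [walsh_eq_prod_range hk x, walsh_eq_prod_range hk y]
  exact prod_congr rfl fun i hi ↦ by
    rw [rademacher_eq_of_natFloor_eq hx hy (mem_range.1 hi) hxy]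

lemma measurable_walsh (k : ℕ) : Measurable (walsh k) :=
  Finset.measurable_prod _ fun _ _ ↦ Measurable.ite (.const _)
    ((measurable_from_top (f := fun z : ℤ ↦ (-1 : ℝ) ^ z)).comp
      (Int.measurable_floor.comp (measurable_id.mul_const _))) measurable_const

open Real Topology

section DyadicPartition

noncomputable def dyadicPoint (N j : ℕ) : ℝ := -π + j * (2 * π / 2 ^ N)

/-- On `[-π, π)` this is the index `j < 2^N` of the cell containing `ω`; at `ω = π` it is `2^N`,
which only matters on a null set. -/
noncomputable def dyadicIndex (N : ℕ) (ω : ℝ) : ℕ := ⌊(ω + π) / (2 * π) * 2 ^ N⌋₊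

variable {N j : ℕ} {ω : ℝ}

lemma dyadicPoint_zero (N : ℕ) : dyadicPoint N 0 = -π := by simp [dyadicPoint]

lemma dyadicPoint_two_pow (N : ℕ) : dyadicPoint N (2 ^ N) = π := by
  rw [dyadicPoint, Nat.cast_pow, Nat.cast_ofNat]
  field_simp
  ring

lemma dyadicPoint_succ (N j : ℕ) : dyadicPoint N (j + 1) = dyadicPoint N j + 2 * π / 2 ^ N := by
  rw [dyadicPoint, dyadicPoint, Nat.cast_succ]
  ring

lemma dyadicPoint_mono (N : ℕ) : Monotone (dyadicPoint N) := fun j j' h ↦ by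
  unfold dyadicPoint
  gcongr

lemma neg_pi_le_dyadicPoint (N j : ℕ) : -π ≤ dyadicPoint N j :=
  dyadicPoint_zero N ▸ dyadicPoint_mono N (Nat.zero_le j)

lemma Icc_dyadicPoint_subset (hj : j < 2 ^ N) :
    Set.Icc (dyadicPoint N j) (dyadicPoint N (j + 1)) ⊆ Set.Icc (-π) π := by
  rw [← dyadicPoint_zero N, ← dyadicPoint_two_pow N]
  exact Set.Icc_subset_Icc (dyadicPoint_mono N (Nat.zero_le j)) (dyadicPoint_mono N hj)

lemma dyadicPoint_le_iff : dyadicPoint N j ≤ ω ↔ (j : ℝ) ≤ (ω + π) / (2 * π) * 2 ^ N := by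
  rw [dyadicPoint, ← sub_nonneg, ← sub_nonneg (b := (j : ℝ))]
  have : (ω + π) / (2 * π) * 2 ^ N - j = (ω - (-π + j * (2 * π / 2 ^ N))) * (2 ^ N / (2 * π)) := by
    field_simp
    ring
  rw [this]
  exact (mul_nonneg_iff_of_pos_right (by positivity)).symm

lemma lt_dyadicPoint_iff : ω < dyadicPoint N j ↔ (ω + π) / (2 * π) * 2 ^ N < (j : ℝ) :=
  not_iff_not.1 (by simpa only [not_lt] using dyadicPoint_le_iff)

lemma dyadicIndex_eq_of_mem (hω : ω ∈ Set.Ico (dyadicPoint N j) (dyadicPoint N (j + 1))) :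
    dyadicIndex N ω = j := by
  have h₁ := dyadicPoint_le_iff.1 hω.1
  have h₂ := lt_dyadicPoint_iff.1 hω.2
  push_cast at h₂
  exact (Nat.floor_eq_iff ((Nat.cast_nonneg j).trans h₁)).2 ⟨h₁, h₂⟩

lemma mem_Ico_dyadicIndex (hω : -π ≤ ω) :
    ω ∈ Set.Ico (dyadicPoint N (dyadicIndex N ω)) (dyadicPoint N (dyadicIndex N ω + 1)) := by
  have h₀ : 0 ≤ (ω + π) / (2 * π) * 2 ^ N := by
    have : 0 ≤ ω + π := by linarith
    positivity
  refine ⟨dyadicPoint_le_iff.2 (Nat.floor_le h₀), lt_dyadicPoint_iff.2 ?_⟩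
  rw [Nat.cast_succ]
  exact Nat.lt_floor_add_one _

lemma dyadicIndex_lt (hω : ω < π) : dyadicIndex N ω < 2 ^ N := by
  refine (Nat.floor_lt' (by positivity)).2 ?_
  rw [← dyadicPoint_two_pow N] at hω
  exact_mod_cast lt_dyadicPoint_iff.1 hω

lemma dyadicIndex_eq_div (N : ℕ) (ω : ℝ) : dyadicIndex N ω = dyadicIndex (N + 1) ω / 2 := by
  rw [dyadicIndex, natFloor_mul_two_pow_eq_div _ (Nat.le_add_right N 1),
    Nat.add_sub_cancel_left, pow_one]
  rfl

lemma measurable_dyadicIndex (N : ℕ) : Measurable (dyadicIndex N) :=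
  Nat.measurable_floor.comp (((measurable_id.add_const π).div_const _).mul_const _)

lemma walshTheta_eq_of_mem {k : ℕ} (hk : k < 2 ^ N)
    (hω : ω ∈ Set.Ico (dyadicPoint N j) (dyadicPoint N (j + 1))) :
    walshTheta k ω = walsh k ((j : ℝ) / 2 ^ N) := by
  have hω₀ : 0 ≤ (ω + π) / (2 * π) := by
    have : -π ≤ ω := (neg_pi_le_dyadicPoint N j).trans hω.1
    have : 0 ≤ ω + π := by linarith
    positivity
  refine walsh_eq_of_natFloor_eq hω₀ (by positivity) hk ?_
  rw [div_mul_cancel₀ _ (by positivity), Nat.floor_natCast]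
  exact dyadicIndex_eq_of_mem hω

lemma walshTheta_two_pow_eq_of_mem {m : ℕ}
    (hω : ω ∈ Set.Ico (dyadicPoint (N + 1) m) (dyadicPoint (N + 1) (m + 1))) :
    walshTheta (2 ^ N) ω = (-1) ^ m := by
  have hω₀ : 0 ≤ (ω + π) / (2 * π) * 2 ^ (N + 1) :=
    (Nat.cast_nonneg m).trans (dyadicPoint_le_iff.1 hω.1)
  rw [walshTheta, ← add_zero (2 ^ N), walsh_two_pow_add (Nat.two_pow_pos N), walsh_zero, mul_one,
    rademacher, ← Int.natCast_floor_eq_floor hω₀, zpow_natCast]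
  exact congrArg _ (dyadicIndex_eq_of_mem hω)

end DyadicPartition

section CellIntegrals

variable {E : Type*} [NormedAddCommGroup E] [NormedSpace ℝ E]

lemma setIntegral_Icc_congr_Ico {F F' : ℝ → E} {a b : ℝ} (h : Set.EqOn F F' (Set.Ico a b)) :
    ∫ ω in Set.Icc a b, F ω = ∫ ω in Set.Icc a b, F' ω := by
  rw [integral_Icc_eq_integral_Ioo, integral_Icc_eq_integral_Ioo]
  exact setIntegral_congr_fun measurableSet_Ioo (h.mono Set.Ioo_subset_Ico_self)

lemma integral_Icc_eq_sum_dyadic {F : ℝ → E} (hF : IntegrableOn F (Set.Icc (-π) π)) (N : ℕ) :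
    ∫ ω in Set.Icc (-π) π, F ω =
      ∑ j ∈ range (2 ^ N), ∫ ω in Set.Icc (dyadicPoint N j) (dyadicPoint N (j + 1)), F ω := by
  have hcell : ∀ j < 2 ^ N, IntervalIntegrable F volume (dyadicPoint N j) (dyadicPoint N (j + 1)) :=
    fun j hj ↦ (intervalIntegrable_iff_integrableOn_Icc_of_le (dyadicPoint_mono N j.le_succ)).2
      (hF.mono_set (Icc_dyadicPoint_subset hj))
  calc ∫ ω in Set.Icc (-π) π, F ω
      = ∫ ω in dyadicPoint N 0..dyadicPoint N (2 ^ N), F ω := by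
        rw [dyadicPoint_zero, dyadicPoint_two_pow,
          intervalIntegral.integral_of_le (by linarith [pi_pos]), integral_Icc_eq_integral_Ioc]
    _ = ∑ j ∈ range (2 ^ N), ∫ ω in dyadicPoint N j..dyadicPoint N (j + 1), F ω :=
        (intervalIntegral.sum_integral_adjacent_intervals hcell).symm
    _ = _ := sum_congr rfl fun j _ ↦ by
        rw [intervalIntegral.integral_of_le (dyadicPoint_mono N j.le_succ),
          integral_Icc_eq_integral_Ioc]

lemma integral_mul_eq_sum_dyadic {G φ : ℝ → ℂ} {N : ℕ}
    (hGφ : IntegrableOn (fun ω ↦ G ω * φ ω) (Set.Icc (-π) π)) (c : ℕ → ℂ)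
    (hφ : ∀ j, Set.EqOn φ (fun _ ↦ c j) (Set.Ico (dyadicPoint N j) (dyadicPoint N (j + 1)))) :
    ∫ ω in Set.Icc (-π) π, G ω * φ ω =
      ∑ j ∈ range (2 ^ N), c j * ∫ ω in Set.Icc (dyadicPoint N j) (dyadicPoint N (j + 1)), G ω := by
  rw [integral_Icc_eq_sum_dyadic hGφ N]
  refine sum_congr rfl fun j _ ↦ ?_
  rw [setIntegral_Icc_congr_Ico (F' := fun ω ↦ G ω * c j) fun ω hω ↦ by rw [hφ j hω],
    integral_mul_const, mul_comm]

end CellIntegrals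

section WalshCoefficients

variable {G H : ℝ → ℂ} {N : ℕ}

lemma measurable_walshTheta (k : ℕ) : Measurable (walshTheta k) :=
  (measurable_walsh k).comp ((measurable_id.add_const _).div_const _)

lemma norm_walshTheta (k : ℕ) (ω : ℝ) : ‖(walshTheta k ω : ℂ)‖ = 1 := by
  rw [Complex.norm_real, Real.norm_eq_abs]
  exact abs_walsh k _

lemma MeasureTheory.IntegrableOn.mul_walshTheta {s : Set ℝ} (hG : IntegrableOn G s) (k : ℕ) :
    IntegrableOn (fun ω ↦ G ω * walshTheta k ω) s :=
  hG.mul_bdd (Complex.measurable_ofReal.comp (measurable_walshTheta k)).aestronglyMeasurable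
    (Eventually.of_forall fun ω ↦ (norm_walshTheta k ω).le)

lemma integral_mul_walshTheta_eq_sum (hG : IntegrableOn G (Set.Icc (-π) π)) {k : ℕ}
    (hk : k < 2 ^ N) :
    ∫ ω in Set.Icc (-π) π, G ω * walshTheta k ω =
      ∑ j ∈ range (2 ^ N), (walsh k ((j : ℝ) / 2 ^ N) : ℂ) *
        ∫ ω in Set.Icc (dyadicPoint N j) (dyadicPoint N (j + 1)), G ω :=
  integral_mul_eq_sum_dyadic (hG.mul_walshTheta k) _ fun _ _ hω ↦
    congrArg Complex.ofReal (walshTheta_eq_of_mem hk hω)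

lemma sum_walsh_mul_walsh_dyadic {j j' : ℕ} (hj : j < 2 ^ N) (hj' : j' < 2 ^ N) :
    ∑ k ∈ range (2 ^ N), walsh k ((j : ℝ) / 2 ^ N) * walsh k ((j' : ℝ) / 2 ^ N) =
      if j = j' then 2 ^ N else 0 := by
  have hfloor : ∀ i : ℕ, ⌊(i / 2 ^ N : ℝ) * 2 ^ N⌋₊ = i := fun i ↦ by
    rw [div_mul_cancel₀ _ (by positivity), Nat.floor_natCast]
  simpa only [hfloor] using sum_walsh_mul_walsh_eq_ite (N := N) (x := j / 2 ^ N)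
    (y := j' / 2 ^ N) (by positivity) (by positivity) (by rwa [hfloor]) (by rwa [hfloor])

lemma sum_integral_mul_walshTheta_mul_eq_sum_dyadic (hG : IntegrableOn G (Set.Icc (-π) π))
    (hH : IntegrableOn H (Set.Icc (-π) π)) (N : ℕ) :
    ∑ k ∈ range (2 ^ N),
        (∫ ω in Set.Icc (-π) π, G ω * walshTheta k ω) *
          ∫ ω in Set.Icc (-π) π, H ω * walshTheta k ω =
      2 ^ N * ∑ j ∈ range (2 ^ N),
        (∫ ω in Set.Icc (dyadicPoint N j) (dyadicPoint N (j + 1)), G ω) *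
          ∫ ω in Set.Icc (dyadicPoint N j) (dyadicPoint N (j + 1)), H ω := by
  rw [sum_congr rfl fun k hk ↦ by rw [integral_mul_walshTheta_eq_sum hG (mem_range.1 hk),
    integral_mul_walshTheta_eq_sum hH (mem_range.1 hk)]]
  refine sum_mul_sum_eq_of_orthogonal _ (fun j hj j' hj' ↦ ?_) _ _
  have h := congrArg Complex.ofReal (sum_walsh_mul_walsh_dyadic (mem_range.1 hj) (mem_range.1 hj'))
  push_cast [apply_ite Complex.ofReal] at h
  exact h

lemma integral_mul_walshTheta_two_pow_eq_zero {Φ : ℝ → ℂ}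
    (hΦ : IntegrableOn Φ (Set.Icc (-π) π)) (c : ℕ → ℂ)
    (hc : ∀ j, Set.EqOn Φ (fun _ ↦ c j) (Set.Ico (dyadicPoint N j) (dyadicPoint N (j + 1)))) :
    ∫ ω in Set.Icc (-π) π, Φ ω * walshTheta (2 ^ N) ω = 0 := by
  have hcell : ∀ m, ∫ ω in Set.Icc (dyadicPoint (N + 1) m) (dyadicPoint (N + 1) (m + 1)),
      Φ ω * walshTheta (2 ^ N) ω = (2 * π / 2 ^ (N + 1) : ℝ) • ((-1) ^ m * c (m / 2)) := by
    intro m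
    rw [setIntegral_Icc_congr_Ico (F' := fun _ ↦ (-1) ^ m * c (m / 2)) fun ω hω ↦ ?_,
      setIntegral_const, volume_real_Icc_of_le (dyadicPoint_mono _ m.le_succ), dyadicPoint_succ,
      add_sub_cancel_left]
    have hidx : dyadicIndex N ω = m / 2 := by
      rw [dyadicIndex_eq_div, dyadicIndex_eq_of_mem hω]
    rw [hc (m / 2) (hidx ▸ mem_Ico_dyadicIndex ((neg_pi_le_dyadicPoint _ _).trans hω.1)),
      walshTheta_two_pow_eq_of_mem hω]
    push_cast
    ring
  rw [integral_Icc_eq_sum_dyadic (hΦ.mul_walshTheta _) (N + 1), sum_congr rfl fun m _ ↦ hcell m,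
    pow_succ, mul_comm]
  refine sum_range_two_mul_eq_zero (fun j ↦ ?_) _
  rw [show (2 * j + 1) / 2 = j by omega, show 2 * j / 2 = j by omega, pow_succ, ← smul_neg]
  ring_nf

end WalshCoefficients

section DyadicAverage

noncomputable def dyadicCellAverage (H : ℝ → ℂ) (N j : ℕ) : ℂ :=
  ((2 ^ N / (2 * π) : ℝ) : ℂ) * ∫ ω in Set.Icc (dyadicPoint N j) (dyadicPoint N (j + 1)), H ω

noncomputable def dyadicAverage (H : ℝ → ℂ) (N : ℕ) (ω : ℝ) : ℂ :=
  dyadicCellAverage H N (dyadicIndex N ω)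

variable {H : ℝ → ℂ} {N j : ℕ}

lemma volume_real_Icc_dyadicPoint (N j : ℕ) :
    volume.real (Set.Icc (dyadicPoint N j) (dyadicPoint N (j + 1))) = 2 * π / 2 ^ N := by
  rw [volume_real_Icc_of_le (dyadicPoint_mono N j.le_succ), dyadicPoint_succ, add_sub_cancel_left]

lemma dyadicAverage_eqOn (H : ℝ → ℂ) (N j : ℕ) :
    Set.EqOn (dyadicAverage H N) (fun _ ↦ dyadicCellAverage H N j)
      (Set.Ico (dyadicPoint N j) (dyadicPoint N (j + 1))) := fun ω hω ↦ by
  rw [dyadicAverage, dyadicIndex_eq_of_mem hω]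

lemma measurable_dyadicAverage (H : ℝ → ℂ) (N : ℕ) : Measurable (dyadicAverage H N) :=
  measurable_from_top.comp (measurable_dyadicIndex N)

lemma norm_dyadicCellAverage_le {C : ℝ}
    (hC : ∀ᵐ ω ∂volume.restrict (Set.Icc (-π) π), ‖H ω‖ ≤ C) (hj : j < 2 ^ N) :
    ‖dyadicCellAverage H N j‖ ≤ C := by
  have hcell := norm_setIntegral_le_of_norm_le_const_ae measure_Icc_lt_top
    (ae_restrict_of_ae_restrict_of_subset (Icc_dyadicPoint_subset hj) hC)
  rw [volume_real_Icc_dyadicPoint] at hcell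
  rw [dyadicCellAverage, norm_mul, Complex.norm_real, Real.norm_of_nonneg (by positivity)]
  calc 2 ^ N / (2 * π) * ‖∫ ω in Set.Icc (dyadicPoint N j) (dyadicPoint N (j + 1)), H ω‖
      ≤ 2 ^ N / (2 * π) * (C * (2 * π / 2 ^ N)) := by gcongr
    _ = C := by field_simp

lemma norm_dyadicCellAverage_sub_le (hH : IntegrableOn H (Set.Icc (-π) π)) (hj : j < 2 ^ N)
    (z : ℂ) :
    ‖dyadicCellAverage H N j - z‖ ≤
      ⨍ ω in Set.Icc (dyadicPoint N j) (dyadicPoint N (j + 1)), ‖H ω - z‖ := by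
  set s := Set.Icc (dyadicPoint N j) (dyadicPoint N (j + 1))
  have hlen : ((2 ^ N / (2 * π) : ℝ) : ℂ) * ((2 * π / 2 ^ N : ℝ) : ℂ) = 1 := by
    rw [← Complex.ofReal_mul, ← Complex.ofReal_one]
    congr 1
    field_simp
  have hsub : dyadicCellAverage H N j - z = ((2 ^ N / (2 * π) : ℝ) : ℂ) * ∫ ω in s, (H ω - z) := by
    rw [integral_sub (hH.mono_set (Icc_dyadicPoint_subset hj))
        (integrableOn_const measure_Icc_lt_top.ne),
      setIntegral_const, volume_real_Icc_dyadicPoint, Complex.real_smul, mul_sub, ← mul_assoc, hlen,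
      one_mul, dyadicCellAverage]
  rw [hsub, setAverage_eq, volume_real_Icc_dyadicPoint, inv_div, smul_eq_mul, norm_mul,
    Complex.norm_real, Real.norm_of_nonneg (by positivity)]
  gcongr
  exact norm_integral_le_integral_norm _

lemma ae_norm_dyadicAverage_le {C : ℝ} (hC : ∀ᵐ ω ∂volume.restrict (Set.Icc (-π) π), ‖H ω‖ ≤ C)
    (N : ℕ) : ∀ᵐ ω ∂volume.restrict (Set.Icc (-π) π), ‖dyadicAverage H N ω‖ ≤ C := by
  rw [← Measure.restrict_congr_set Ico_ae_eq_Icc]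
  filter_upwards [ae_restrict_mem measurableSet_Ico] with ω hω
  exact norm_dyadicCellAverage_le hC (dyadicIndex_lt hω.2)

lemma MeasureTheory.MemLp.dyadicAverage (hH : MemLp H ⊤ (volume.restrict (Set.Icc (-π) π)))
    (N : ℕ) : MemLp (dyadicAverage H N) ⊤ (volume.restrict (Set.Icc (-π) π)) :=
  .of_bound (measurable_dyadicAverage H N).aestronglyMeasurable _
    (ae_norm_dyadicAverage_le (ae_le_lpNorm_exponent_top hH) N)

/-- Each dyadic cell is a closed ball about its midpoint, so this is Lebesgue's
differentiation theorem. -/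
lemma ae_tendsto_dyadicAverage (hH : IntegrableOn H (Set.Icc (-π) π)) :
    ∀ᵐ ω ∂volume.restrict (Set.Icc (-π) π),
      Tendsto (fun N ↦ dyadicAverage H N ω) atTop (𝓝 (H ω)) := by
  have hLeb := IsUnifLocDoublingMeasure.ae_tendsto_average_norm_sub volume
    (hH.integrable_indicator measurableSet_Icc).locallyIntegrable 1
  rw [← Measure.restrict_congr_set Ico_ae_eq_Icc]
  filter_upwards [ae_restrict_of_ae hLeb, ae_restrict_mem measurableSet_Ico] with ω hω hωI
  set j : ℕ → ℕ := fun N ↦ dyadicIndex N ω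
  have hball : ∀ N, Metric.closedBall (dyadicPoint N (j N) + π / 2 ^ N) (π / 2 ^ N) =
      Set.Icc (dyadicPoint N (j N)) (dyadicPoint N (j N + 1)) := fun N ↦ by
    rw [Real.closedBall_eq_Icc, dyadicPoint_succ]
    congr 1 <;> ring
  have hδ : Tendsto (fun N : ℕ ↦ π / 2 ^ N) atTop (𝓝[>] 0) :=
    tendsto_nhdsWithin_of_tendsto_nhds_of_eventually_within _
      (tendsto_const_nhds.div_atTop (tendsto_pow_atTop_atTop_of_one_lt one_lt_two))
      (Eventually.of_forall fun N ↦ Set.mem_Ioi.2 (by positivity))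
  have hmem : ∀ N, ω ∈ Metric.closedBall (dyadicPoint N (j N) + π / 2 ^ N) (1 * (π / 2 ^ N)) :=
    fun N ↦ by
      rw [one_mul, hball]
      exact Set.Ico_subset_Icc_self (mem_Ico_dyadicIndex hωI.1)
  refine tendsto_iff_norm_sub_tendsto_zero.2 <|
    squeeze_zero (fun _ ↦ norm_nonneg _) (fun N ↦ ?_) (hω _ _ hδ (Eventually.of_forall hmem))
  have hcell := Icc_dyadicPoint_subset (dyadicIndex_lt (N := N) hωI.2)
  rw [hball, setAverage_congr_fun measurableSet_Icc (Eventually.of_forall fun y hy ↦ by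
    rw [Set.indicator_of_mem (hcell hy), Set.indicator_of_mem (Set.Ico_subset_Icc_self hωI)])]
  exact norm_dyadicCellAverage_sub_le hH (dyadicIndex_lt hωI.2) _

lemma tendsto_integral_mul_norm_dyadicAverage_sub {g : ℝ → ℝ}
    (hg : IntegrableOn g (Set.Icc (-π) π)) (hH : MemLp H ⊤ (volume.restrict (Set.Icc (-π) π))) :
    Tendsto (fun N ↦ ∫ ω in Set.Icc (-π) π, g ω * ‖dyadicAverage H N ω - H ω‖) atTop (𝓝 0) := by
  have hC := ae_le_lpNorm_exponent_top hH
  set C := lpNorm H ⊤ (volume.restrict (Set.Icc (-π) π))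
  have hlim := tendsto_integral_of_dominated_convergence (f := fun _ ↦ 0)
    (F := fun N ω ↦ g ω * ‖dyadicAverage H N ω - H ω‖) (fun ω ↦ ‖g ω‖ * (2 * C))
    (fun N ↦ hg.aestronglyMeasurable.mul
      ((hH.dyadicAverage N).aestronglyMeasurable.sub hH.aestronglyMeasurable).norm)
    (hg.norm.mul_const _) (fun N ↦ ?_) ?_
  · simpa using hlim
  · filter_upwards [hC, ae_norm_dyadicAverage_le hC N] with ω hHω hAω
    rw [norm_mul, norm_norm]
    gcongr
    linarith [norm_sub_le (dyadicAverage H N ω) (H ω)]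
  · filter_upwards [ae_tendsto_dyadicAverage (hH.integrable le_top)] with ω hω
    simpa using (tendsto_iff_norm_sub_tendsto_zero.1 hω).const_mul (g ω)

end DyadicAverage

section Approximation

variable {G H : ℝ → ℂ}

lemma integral_mul_dyadicAverage (hG : IntegrableOn G (Set.Icc (-π) π))
    (hH : MemLp H ⊤ (volume.restrict (Set.Icc (-π) π))) (N : ℕ) :
    ∫ ω in Set.Icc (-π) π, G ω * dyadicAverage H N ω =
      ∑ j ∈ range (2 ^ N), dyadicCellAverage H N j *
        ∫ ω in Set.Icc (dyadicPoint N j) (dyadicPoint N (j + 1)), G ω :=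
  integral_mul_eq_sum_dyadic (hG.mul_of_top_left (hH.dyadicAverage N)) _ (dyadicAverage_eqOn H N)

lemma sum_integral_mul_walshTheta_mul_eq_integral_mul_dyadicAverage
    (hG : IntegrableOn G (Set.Icc (-π) π)) (hH : MemLp H ⊤ (volume.restrict (Set.Icc (-π) π)))
    (N : ℕ) :
    ∑ k ∈ range (2 ^ N),
        (∫ ω in Set.Icc (-π) π, G ω * walshTheta k ω) *
          ∫ ω in Set.Icc (-π) π, H ω * walshTheta k ω =
      2 * π * ∫ ω in Set.Icc (-π) π, G ω * dyadicAverage H N ω := by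
  rw [sum_integral_mul_walshTheta_mul_eq_sum_dyadic hG (hH.integrable le_top),
    integral_mul_dyadicAverage hG hH, mul_sum, mul_sum]
  refine sum_congr rfl fun j _ ↦ ?_
  rw [dyadicCellAverage]
  push_cast
  field_simp

lemma norm_integral_mul_sub_sum_walshTheta_le (hG : IntegrableOn G (Set.Icc (-π) π))
    (hH : MemLp H ⊤ (volume.restrict (Set.Icc (-π) π))) (N : ℕ) :
    ‖(1 / (2 * π)) * (∫ ω in Set.Icc (-π) π, G ω * H ω) -
        ∑ k ∈ range (2 ^ N + 1), ((1 / (2 * π)) * ∫ ω in Set.Icc (-π) π, G ω * walshTheta k ω) *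
          ((1 / (2 * π)) * ∫ ω in Set.Icc (-π) π, H ω * walshTheta k ω)‖ ≤
      (2 * π)⁻¹ * (∫ ω in Set.Icc (-π) π, ‖G ω‖ * ‖dyadicAverage H N ω - H ω‖) +
        (2 * π)⁻¹ ^ 2 * (∫ ω in Set.Icc (-π) π, ‖G ω‖) *
          ∫ ω in Set.Icc (-π) π, ‖dyadicAverage H N ω - H ω‖ := by
  have hHi : IntegrableOn H (Set.Icc (-π) π) := hH.integrable le_top
  have hA := hH.dyadicAverage N
  have hAi : IntegrableOn (dyadicAverage H N) (Set.Icc (-π) π) := hA.integrable le_top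
  have htail : ∫ ω in Set.Icc (-π) π, H ω * walshTheta (2 ^ N) ω =
      ∫ ω in Set.Icc (-π) π, (H ω - dyadicAverage H N ω) * walshTheta (2 ^ N) ω := by
    simp_rw [sub_mul]
    rw [integral_sub (hHi.mul_walshTheta _) (hAi.mul_walshTheta _),
      integral_mul_walshTheta_two_pow_eq_zero hAi _ (dyadicAverage_eqOn H N), sub_zero]
  have hsplit : (1 / (2 * π)) * (∫ ω in Set.Icc (-π) π, G ω * H ω) -
      ∑ k ∈ range (2 ^ N + 1), ((1 / (2 * π)) * ∫ ω in Set.Icc (-π) π, G ω * walshTheta k ω) *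
        ((1 / (2 * π)) * ∫ ω in Set.Icc (-π) π, H ω * walshTheta k ω) =
      (1 / (2 * π)) * (∫ ω in Set.Icc (-π) π, G ω * (H ω - dyadicAverage H N ω)) -
        (1 / (2 * π)) ^ 2 * ((∫ ω in Set.Icc (-π) π, G ω * walshTheta (2 ^ N) ω) *
          ∫ ω in Set.Icc (-π) π, (H ω - dyadicAverage H N ω) * walshTheta (2 ^ N) ω) := by
    rw [sum_range_succ, ← htail]
    simp_rw [mul_mul_mul_comm (1 / (2 * (π : ℂ))), mul_sub]
    rw [← mul_sum, sum_integral_mul_walshTheta_mul_eq_integral_mul_dyadicAverage hG hH,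
      integral_sub (f := fun ω ↦ G ω * H ω) (g := fun ω ↦ G ω * dyadicAverage H N ω)
        (hG.mul_of_top_left hH) (hG.mul_of_top_left hA)]
    field_simp
    ring
  have hnorm : ‖(1 / (2 * π) : ℂ)‖ = (2 * π)⁻¹ := by
    rw [one_div, norm_inv, norm_mul, Complex.norm_ofNat, Complex.norm_real,
      Real.norm_of_nonneg pi_pos.le]
  have hG' : ‖∫ ω in Set.Icc (-π) π, G ω * walshTheta (2 ^ N) ω‖ ≤
      ∫ ω in Set.Icc (-π) π, ‖G ω‖ :=
    (norm_integral_le_integral_norm _).trans_eq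
      (by simp_rw [norm_mul, norm_walshTheta, mul_one])
  have hHA : ‖∫ ω in Set.Icc (-π) π, (H ω - dyadicAverage H N ω) * walshTheta (2 ^ N) ω‖ ≤
      ∫ ω in Set.Icc (-π) π, ‖dyadicAverage H N ω - H ω‖ :=
    (norm_integral_le_integral_norm _).trans_eq
      (by simp_rw [norm_mul, norm_walshTheta, mul_one, norm_sub_rev])
  have hGHA : ‖∫ ω in Set.Icc (-π) π, G ω * (H ω - dyadicAverage H N ω)‖ ≤
      ∫ ω in Set.Icc (-π) π, ‖G ω‖ * ‖dyadicAverage H N ω - H ω‖ :=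
    (norm_integral_le_integral_norm _).trans_eq (by simp_rw [norm_mul, norm_sub_rev])
  rw [hsplit]
  refine (norm_sub_le _ _).trans ?_
  rw [norm_mul, norm_mul, norm_mul, norm_pow, hnorm, mul_assoc]
  gcongr

end Approximation

lemma norm_exp_I_mul_mul (ω t : ℝ) : ‖Complex.exp (Complex.I * ω * t)‖ = 1 := by
  rw [show Complex.I * ω * t = ((ω * t : ℝ) : ℂ) * Complex.I by push_cast; ring,
    Complex.norm_exp_ofReal_mul_I]

/-- Theorem 71, second part: for every `f ∈ PW¹_π` (given by its
integrable Fourier transform `f̂` on `[-π,π]`) and every stable LTI system (given by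
`ĥ_T ∈ L^∞[-π,π]`), the sums `∑_{k=0}^{2^N} c_k(f,t) (Tθ_k)(0)` built on the Walsh-type
complete orthonormal system `{θ̂_k}` converge uniformly on `ℝ` to `(Tf)(t)` as `N → ∞`. -/
theorem stmt11 (fhat : ℝ → ℂ) (hf : IntegrableOn fhat (Set.Icc (-Real.pi) Real.pi))
    (hT : ℝ → ℂ) (hhT : MemLp hT ⊤ (volume.restrict (Set.Icc (-Real.pi) Real.pi))) :
    TendstoUniformly
      (fun (N : ℕ) (t : ℝ) =>
        ∑ k ∈ Finset.range (2 ^ N + 1),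
          ((1 / (2 * Real.pi)) *
              ∫ ω in Set.Icc (-Real.pi) Real.pi,
                fhat ω * (walshTheta k ω : ℂ) * Complex.exp (Complex.I * ω * t)) *
          ((1 / (2 * Real.pi)) *
              ∫ ω in Set.Icc (-Real.pi) Real.pi, hT ω * (walshTheta k ω : ℂ)))
      (fun t : ℝ =>
        (1 / (2 * Real.pi)) *
          ∫ ω in Set.Icc (-Real.pi) Real.pi,
            fhat ω * hT ω * Complex.exp (Complex.I * ω * t))
      Filter.atTop := by
  set G : ℝ → ℝ → ℂ := fun t ω ↦ fhat ω * Complex.exp (Complex.I * ω * t)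
  have hnormG : ∀ t ω, ‖G t ω‖ = ‖fhat ω‖ := fun t ω ↦ by
    rw [norm_mul, norm_exp_I_mul_mul, mul_one]
  have hG : ∀ t, IntegrableOn (G t) (Set.Icc (-π) π) := fun t ↦
    hf.mul_bdd (by fun_prop) (Eventually.of_forall fun ω ↦ (norm_exp_I_mul_mul ω t).le)
  set ε : ℕ → ℝ := fun N ↦
    (2 * π)⁻¹ * (∫ ω in Set.Icc (-π) π, ‖fhat ω‖ * ‖dyadicAverage hT N ω - hT ω‖) +
      (2 * π)⁻¹ ^ 2 * (∫ ω in Set.Icc (-π) π, ‖fhat ω‖) *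
        ∫ ω in Set.Icc (-π) π, ‖dyadicAverage hT N ω - hT ω‖
  have hε : Tendsto ε atTop (𝓝 0) := by
    simpa [ε] using
      ((tendsto_integral_mul_norm_dyadicAverage_sub hf.norm hhT).const_mul (2 * π)⁻¹).add
        ((tendsto_integral_mul_norm_dyadicAverage_sub (g := fun _ ↦ 1)
          (integrableOn_const measure_Icc_lt_top.ne) hhT).const_mul
          ((2 * π)⁻¹ ^ 2 * ∫ ω in Set.Icc (-π) π, ‖fhat ω‖))
  have hintegrand : ∀ (t : ℝ) (φ : ℝ → ℂ),
      ∫ ω in Set.Icc (-π) π, fhat ω * φ ω * Complex.exp (Complex.I * ω * t) =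
        ∫ ω in Set.Icc (-π) π, G t ω * φ ω := fun t φ ↦
    integral_congr_ae (Eventually.of_forall fun ω ↦ mul_right_comm _ _ _)
  refine Metric.tendstoUniformly_iff.2 fun δ hδ ↦ ?_
  filter_upwards [hε.eventually (gt_mem_nhds hδ)] with N hN t
  refine lt_of_le_of_lt ?_ hN
  rw [dist_eq_norm]
  simp only [hintegrand]
  simpa only [hnormG] using norm_integral_mul_sub_sum_walshTheta_le (hG t) hhT N
end

section
/- Let 0 < σ < π and let {θ̂_n}_{n∈ℕ} be a complete orthonormal system of real-valued functions in L²[−π,π] (with inner product (1/(2π)) ∫_{−π}^{π} u v̄ dω) for which there is a constant C₀ such that (1/(2π)) ∫_{−π}^{π} | Σ_{n=1}^{N} θ̂_n(ω) θ̂_n(ω₁) | dω₁ ≤ C₀ for all ω ∈ [−σ,σ] and all N ∈ ℕ. For f ∈ PW¹_σ define c_n(f) = (1/(2π)) ∫_{−σ}^{σ} f̂(ω) θ̂_n(ω) dω and (U_N f̂)(ω) = Σ_{n=1}^{N} c_n(f) θ̂_n(ω). Then for every f ∈ PW¹_σ: (i) (1/(2π)) ∫_{−π}^{π} |(U_N f̂)(ω)|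 dω ≤ C₀ ‖f‖_{PW¹_σ} for all N ∈ ℕ, and (ii) lim_{N→∞} (1/(2π)) ∫_{−π}^{π} | f̂(ω) − (U_N f̂)(ω) | dω = 0. -/
/-!
For the normalized measure `ν = (2π)⁻¹ dω` on `[-π, π]` the paper's inner products are plain
integrals. With `K_N x y = ∑_{n<N} θ_n x θ_n y`, the partial sum `U_N f` is the integral operator
with kernel `K_N`, so by Fubini `‖U_N f‖_{L¹(ν)} ≤ sup_{x ∈ s} ‖K_N x ·‖₁ ‖f‖₁ ≤ C₀ ‖f‖₁`. The same
bound controls each `θ_n` on `s`, as `θ_n x θ_n · = K_{n+1} x · - K_n x ·` and `‖θ_n‖₁ > 0`, so the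
coefficients of every `f ∈ L¹(s)` are defined. For (ii), approximate `f` in `L¹` by `h ∈ L²`: the
expansion of `h` converges in `L²` because the `θ_n` form a Hilbert basis, hence in `L¹(ν)` as `ν`
is finite, while by (i) the error `U_N (h - f)` stays below `C₀ ‖h - f‖₁` uniformly in `N`.
-/

open MeasureTheory Filter Finset
open scoped Topology

variable {α : Type*} [MeasurableSpace α]

noncomputable def expansionKernel (θ : ℕ → α → ℝ) (N : ℕ) (x y : α) : ℝ :=
  ∑ n ∈ range N, θ n x * θ n y

noncomputable def expansionPartialSum (θ : ℕ → α → ℝ) (μ : Measure α) (f : α → ℂ) (N : ℕ)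
    (y : α) : ℂ :=
  ∑ n ∈ range N, (∫ x, f x * θ n x ∂μ) * θ n y

theorem integral_norm_add_le {E : Type*} [NormedAddCommGroup E] {μ : Measure α} {f g : α → E}
    (hf : Integrable f μ) (hg : Integrable g μ) :
    ∫ x, ‖f x + g x‖ ∂μ ≤ ∫ x, ‖f x‖ ∂μ + ∫ x, ‖g x‖ ∂μ :=
  (integral_mono (hf.add hg).norm (hf.norm.add hg.norm) fun _ => norm_add_le _ _).trans_eq
    (integral_add hf.norm hg.norm)

theorem integral_norm_integral_smul_le {β E : Type*} [MeasurableSpace β] [NormedAddCommGroup E]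
    [NormedSpace ℝ E] {μ : Measure α} {ν : Measure β} [SFinite μ] [SFinite ν] {K : α → β → ℝ}
    {f : α → E} {C : ℝ} (hKf : Integrable (fun p : α × β => K p.1 p.2 • f p.1) (μ.prod ν))
    (hf : Integrable f μ) (hK : ∀ᵐ x ∂μ, ∫ y, |K x y| ∂ν ≤ C) :
    ∫ y, ‖∫ x, K x y • f x ∂μ‖ ∂ν ≤ C * ∫ x, ‖f x‖ ∂μ :=
  calc ∫ y, ‖∫ x, K x y • f x ∂μ‖ ∂ν ≤ ∫ y, ∫ x, ‖K x y • f x‖ ∂μ ∂ν :=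
        integral_mono_of_nonneg (.of_forall fun _ => norm_nonneg _)
          hKf.norm.integral_prod_right (.of_forall fun _ => norm_integral_le_integral_norm _)
    _ = ∫ x, (∫ y, |K x y| ∂ν) * ‖f x‖ ∂μ := by
        rw [← integral_integral_swap hKf.norm]
        simp only [norm_smul, Real.norm_eq_abs, integral_mul_const]
    _ ≤ ∫ x, C * ‖f x‖ ∂μ :=
        integral_mono_of_nonneg (.of_forall fun _ => by positivity) (hf.norm.const_mul C)
          (hK.mono fun _ hx => mul_le_mul_of_nonneg_right hx (norm_nonneg _))
    _ = C * ∫ x, ‖f x‖ ∂μ := integral_const_mul _ _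

theorem tendsto_integral_norm_of_tendsto_eLpNorm_two {ι E : Type*} [NormedAddCommGroup E]
    {μ : Measure α} [IsFiniteMeasure μ] {l : Filter ι} {F : ι → α → E}
    (hF : ∀ i, AEStronglyMeasurable (F i) μ) (h : Tendsto (fun i => eLpNorm (F i) 2 μ) l (𝓝 0)) :
    Tendsto (fun i => ∫ x, ‖F i x‖ ∂μ) l (𝓝 0) := by
  have hc : μ Set.univ ^ (1 / (1 : ENNReal).toReal - 1 / (2 : ENNReal).toReal) ≠ ⊤ :=
    ENNReal.rpow_ne_top_of_nonneg (by norm_num) (measure_ne_top _ _)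
  have hL1 : Tendsto (fun i => eLpNorm (F i) 1 μ) l (𝓝 0) :=
    tendsto_of_tendsto_of_tendsto_of_le_of_le tendsto_const_nhds
      (by simpa using ENNReal.Tendsto.mul_const h (.inr hc)) (fun _ => zero_le)
      fun i => eLpNorm_le_eLpNorm_mul_rpow_measure_univ one_le_two (hF i)
  refine ((ENNReal.tendsto_toReal ENNReal.zero_ne_top).comp hL1).congr fun i => ?_
  rw [Function.comp_apply, eLpNorm_one_eq_lintegral_enorm,
    integral_norm_eq_lintegral_enorm (hF i)]

theorem MeasureTheory.Integrable.exists_memLp_two_integral_norm_sub_le {E : Type*}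
    [NormedAddCommGroup E] {μ : Measure α} [IsFiniteMeasure μ] {f : α → E} (hf : Integrable f μ)
    {δ : ℝ} (hδ : 0 < δ) :
    ∃ h : α → E, MemLp h 2 μ ∧ ∫ x, ‖f x - h x‖ ∂μ ≤ δ := by
  obtain ⟨g, hfg, -⟩ := (memLp_one_iff_integrable.2 hf).exists_simpleFunc_eLpNorm_sub_lt
    ENNReal.one_ne_top (ENNReal.ofReal_pos.2 hδ).ne'
  refine ⟨g, g.memLp_of_isFiniteMeasure 2 μ, ?_⟩
  have := ENNReal.toReal_le_of_le_ofReal hδ.le hfg.le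
  rwa [eLpNorm_one_eq_lintegral_enorm,
    ← integral_norm_eq_lintegral_enorm (hf.1.sub g.aestronglyMeasurable)] at this

theorem tendsto_nhds_zero_of_forall_le_add {x : ℕ → ℝ} (hx : ∀ N, 0 ≤ x N)
    (h : ∀ ε > 0, ∃ b : ℕ → ℝ, Tendsto b atTop (𝓝 0) ∧ ∀ N, x N ≤ ε + b N) :
    Tendsto x atTop (𝓝 0) := by
  refine tendsto_order.2 ⟨fun a ha => .of_forall fun N => ha.trans_le (hx N), fun a ha => ?_⟩
  obtain ⟨b, hb, hxb⟩ := h (a / 2) (half_pos ha)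
  filter_upwards [hb.eventually (gt_mem_nhds (half_pos ha))] with N hN
  linarith [hxb N]

theorem MeasureTheory.MemLp.of_ofReal_smul_measure {E : Type*} [NormedAddCommGroup E]
    {μ : Measure α} {p : ENNReal} {c : ℝ} (hc : 0 < c) {f : α → E}
    (hf : MemLp f p (ENNReal.ofReal c • μ)) : MemLp f p μ := by
  have hc' : ENNReal.ofReal c ≠ 0 := (ENNReal.ofReal_pos.2 hc).ne'
  refine hf.of_measure_le_smul (ENNReal.inv_ne_top.2 hc') ?_
  rw [smul_smul, ENNReal.inv_mul_cancel hc' ENNReal.ofReal_ne_top, one_smul]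

theorem integral_ofReal_smul_measure {E : Type*} [NormedAddCommGroup E] [NormedSpace ℝ E]
    {μ : Measure α} {c : ℝ} (hc : 0 ≤ c) (f : α → E) :
    ∫ x, f x ∂(ENNReal.ofReal c • μ) = c • ∫ x, f x ∂μ := by
  rw [integral_smul_measure, ENNReal.toReal_ofReal hc]

section PartialSum

variable {θ : ℕ → α → ℝ} {μ ν : Measure α} {f : α → ℂ}

theorem expansionPartialSum_indicator {s : Set α} (hs : MeasurableSet s) (N : ℕ) :
    expansionPartialSum θ ν (s.indicator f) N = expansionPartialSum θ (ν.restrict s) f N := by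
  ext y
  refine sum_congr rfl fun n _ => ?_
  rw [← integral_indicator hs]
  simp only [Set.indicator_mul_left]

theorem expansionPartialSum_sub {g : α → ℂ}
    (hfθ : ∀ n, Integrable (fun x => f x * θ n x) μ)
    (hgθ : ∀ n, Integrable (fun x => g x * θ n x) μ) (N : ℕ) (y : α) :
    expansionPartialSum θ μ (f - g) N y =
      expansionPartialSum θ μ f N y - expansionPartialSum θ μ g N y := by
  simp only [expansionPartialSum, ← sum_sub_distrib, Pi.sub_apply, sub_mul,
    integral_sub (hfθ _) (hgθ _)]

theorem integrable_expansionPartialSum (hθ : ∀ n, Integrable (θ n) ν) (N : ℕ) :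
    Integrable (expansionPartialSum θ μ f N) ν :=
  integrable_finsetSum _ fun n _ => (hθ n).ofReal.const_mul _

theorem expansionPartialSum_eq_integral_kernel_smul
    (hfθ : ∀ n, Integrable (fun x => f x * θ n x) μ) (N : ℕ) (y : α) :
    expansionPartialSum θ μ f N y = ∫ x, expansionKernel θ N x y • f x ∂μ := by
  have hterm : ∀ n, (fun x => (θ n x * θ n y) • f x) = fun x => f x * θ n x * θ n y := by
    intro n
    ext x
    rw [Complex.real_smul]
    push_cast
    ring
  simp only [expansionPartialSum, expansionKernel, sum_smul]
  rw [integral_finsetSum _ fun n _ => by rw [hterm]; exact (hfθ n).mul_const _]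
  simp only [hterm, integral_mul_const]

theorem integrable_expansionKernel_smul_prod [SFinite ν] (hθ : ∀ n, Integrable (θ n) ν)
    (hfθ : ∀ n, Integrable (fun x => f x * θ n x) μ) (N : ℕ) :
    Integrable (fun p : α × α => expansionKernel θ N p.1 p.2 • f p.1) (μ.prod ν) := by
  simp only [expansionKernel, sum_smul]
  refine integrable_finsetSum _ fun n _ => ((hfθ n).mul_prod (hθ n).ofReal).congr
    (.of_forall fun p => ?_)
  simp only [Complex.real_smul, RCLike.ofReal_eq_complex_ofReal]
  push_cast
  ring

theorem integral_norm_expansionPartialSum_le [SFinite μ] [SFinite ν] {C : ℝ} {N : ℕ}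
    (hθ : ∀ n, Integrable (θ n) ν) (hf : Integrable f μ)
    (hfθ : ∀ n, Integrable (fun x => f x * θ n x) μ)
    (hK : ∀ᵐ x ∂μ, ∫ y, |expansionKernel θ N x y| ∂ν ≤ C) :
    ∫ y, ‖expansionPartialSum θ μ f N y‖ ∂ν ≤ C * ∫ x, ‖f x‖ ∂μ := by
  simp only [expansionPartialSum_eq_integral_kernel_smul hfθ]
  exact integral_norm_integral_smul_le (integrable_expansionKernel_smul_prod hθ hfθ N) hf hK

theorem abs_mul_integral_abs_le_of_kernel_bound (hθ : ∀ n, Integrable (θ n) ν) {x : α} {C : ℝ}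
    (hK : ∀ N, ∫ y, |expansionKernel θ N x y| ∂ν ≤ C) (n : ℕ) :
    |θ n x| * ∫ y, |θ n y| ∂ν ≤ 2 * C := by
  have hKint : ∀ N, Integrable (fun y => |expansionKernel θ N x y|) ν := fun N =>
    (integrable_finsetSum _ fun k _ => (hθ k).const_mul (θ k x)).abs
  calc |θ n x| * ∫ y, |θ n y| ∂ν
      = ∫ y, |expansionKernel θ (n + 1) x y - expansionKernel θ n x y| ∂ν := by
        rw [← integral_const_mul]
        simp only [expansionKernel, sum_range_succ, add_sub_cancel_left, abs_mul]
    _ ≤ ∫ y, (|expansionKernel θ (n + 1) x y| + |expansionKernel θ n x y|) ∂ν :=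
        integral_mono_of_nonneg (.of_forall fun _ => abs_nonneg _)
          ((hKint _).add (hKint _)) (.of_forall fun _ => abs_sub _ _)
    _ = ∫ y, |expansionKernel θ (n + 1) x y| ∂ν + ∫ y, |expansionKernel θ n x y| ∂ν :=
        integral_add (hKint _) (hKint _)
    _ ≤ 2 * C := by linarith [hK (n + 1), hK n]

theorem integral_abs_pos_of_integral_mul_self_ne_zero {g : α → ℝ} (hg : Integrable g ν)
    (h : ∫ y, g y * g y ∂ν ≠ 0) : 0 < ∫ y, |g y| ∂ν := by
  refine (integral_nonneg fun _ => abs_nonneg _).lt_of_ne fun h0 => h ?_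
  have hg0 : g =ᵐ[ν] 0 := by
    filter_upwards [(integral_eq_zero_iff_of_nonneg (fun _ => abs_nonneg _) hg.abs).1 h0.symm]
      with y hy
    exact abs_eq_zero.1 hy
  rw [integral_congr_ae (hg0.mono fun y hy => by simp [hy] : _ =ᵐ[ν] fun _ => (0 : ℝ))]
  exact integral_zero _ _

theorem inner_toLp_ofReal {g : α → ℝ} (hg : MemLp g 2 ν) (x : Lp ℂ 2 ν) :
    inner ℂ ((hg.ofReal (K := ℂ)).toLp _) x = ∫ y, x y * g y ∂ν := by
  rw [L2.inner_def]
  refine integral_congr_ae ?_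
  filter_upwards [(hg.ofReal (K := ℂ)).coeFn_toLp] with y hy
  rw [hy, RCLike.inner_apply, RCLike.conj_ofReal, RCLike.ofReal_eq_complex_ofReal, mul_comm]

theorem orthonormal_toLp_ofReal (hθ2 : ∀ n, MemLp (θ n) 2 ν)
    (hortho : ∀ n m, ∫ x, θ n x * θ m x ∂ν = if n = m then 1 else 0) :
    Orthonormal ℂ fun n => ((hθ2 n).ofReal (K := ℂ)).toLp _ := by
  rw [orthonormal_iff_ite]
  intro n m
  rw [inner_toLp_ofReal (hθ2 n), integral_congr_ae (g := fun x => ((θ n x * θ m x : ℝ) : ℂ)),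
    integral_complex_ofReal, hortho, eq_comm]
  · split_ifs <;> simp_all
  · filter_upwards [((hθ2 m).ofReal (K := ℂ)).coeFn_toLp] with x hx
    rw [hx, RCLike.ofReal_eq_complex_ofReal]
    push_cast
    ring

theorem orthogonal_span_toLp_ofReal_eq_bot (hθ2 : ∀ n, MemLp (θ n) 2 ν)
    (hcomplete : ∀ g : α → ℂ, MemLp g 2 ν → (∀ n, ∫ x, g x * θ n x ∂ν = 0) → g =ᵐ[ν] 0) :
    (Submodule.span ℂ (Set.range fun n => ((hθ2 n).ofReal (K := ℂ)).toLp _))ᗮ = ⊥ := by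
  refine (Submodule.eq_bot_iff _).2 fun x hx => Lp.eq_zero_iff_ae_eq_zero.2 ?_
  refine hcomplete x (Lp.memLp x) fun n => ?_
  rw [← inner_toLp_ofReal (hθ2 n)]
  exact (Submodule.mem_orthogonal _ x).1 hx _ (Submodule.subset_span ⟨n, rfl⟩)

theorem tendsto_eLpNorm_sub_expansionPartialSum (hθ2 : ∀ n, MemLp (θ n) 2 ν)
    (hortho : ∀ n m, ∫ x, θ n x * θ m x ∂ν = if n = m then 1 else 0)
    (hcomplete : ∀ g : α → ℂ, MemLp g 2 ν → (∀ n, ∫ x, g x * θ n x ∂ν = 0) → g =ᵐ[ν] 0)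
    {g : α → ℂ} (hg : MemLp g 2 ν) :
    Tendsto (fun N => eLpNorm (g - expansionPartialSum θ ν g N) 2 ν) atTop (𝓝 0) := by
  set e := fun n => ((hθ2 n).ofReal (K := ℂ)).toLp _
  set b := HilbertBasis.mkOfOrthogonalEqBot (orthonormal_toLp_ofReal hθ2 hortho)
    (orthogonal_span_toLp_ofReal_eq_bot hθ2 hcomplete)
  have hb : ⇑b = e := HilbertBasis.coe_mkOfOrthogonalEqBot _ _
  have hcoeff : ∀ n, inner ℂ (e n) (hg.toLp g) = ∫ y, g y * θ n y ∂ν := fun n => by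
    rw [inner_toLp_ofReal (hθ2 n)]
    refine integral_congr_ae ?_
    filter_upwards [hg.coeFn_toLp] with y hy
    rw [hy]
  have hsum := (b.hasSum_repr (hg.toLp g)).tendsto_sum_nat
  simp only [b.repr_apply_apply, hb, hcoeff] at hsum
  rw [Lp.tendsto_Lp_iff_tendsto_eLpNorm' (E := ℂ)] at hsum
  refine hsum.congr fun N => ?_
  rw [← eLpNorm_neg]
  refine eLpNorm_congr_ae ?_
  filter_upwards [Lp.coeFn_fun_finsetSum (range N) fun n => (∫ y, g y * θ n y ∂ν) • e n,
    hg.coeFn_toLp,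
    ae_all_iff.2 fun n => Lp.coeFn_smul (∫ y, g y * θ n y ∂ν) (e n),
    ae_all_iff.2 fun n => ((hθ2 n).ofReal (K := ℂ)).coeFn_toLp] with y hS hx hsmul he
  have he' : ∀ n, e n y = θ n y := he
  simp only [Pi.neg_apply, Pi.sub_apply, hS, hx, hsmul, Pi.smul_apply, he', smul_eq_mul,
    expansionPartialSum, neg_sub]

theorem tendsto_integral_norm_sub_expansionPartialSum [IsFiniteMeasure ν]
    (hθ2 : ∀ n, MemLp (θ n) 2 ν)
    (hortho : ∀ n m, ∫ x, θ n x * θ m x ∂ν = if n = m then 1 else 0)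
    (hcomplete : ∀ g : α → ℂ, MemLp g 2 ν → (∀ n, ∫ x, g x * θ n x ∂ν = 0) → g =ᵐ[ν] 0)
    {g : α → ℂ} (hg : MemLp g 2 ν) :
    Tendsto (fun N => ∫ y, ‖g y - expansionPartialSum θ ν g N y‖ ∂ν) atTop (𝓝 0) := by
  have hθ : ∀ n, Integrable (θ n) ν := fun n => (hθ2 n).integrable one_le_two
  exact tendsto_integral_norm_of_tendsto_eLpNorm_two
    (fun N => hg.1.sub (integrable_expansionPartialSum hθ N).1)
    (tendsto_eLpNorm_sub_expansionPartialSum hθ2 hortho hcomplete hg)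

end PartialSum

section KernelBound

variable {θ : ℕ → α → ℝ} {ν : Measure α} [IsFiniteMeasure ν] {s : Set α} {C : ℝ}

theorem integrable_mul_of_kernel_bound (hs : MeasurableSet s) (hθ2 : ∀ n, MemLp (θ n) 2 ν)
    (hortho : ∀ n m, ∫ x, θ n x * θ m x ∂ν = if n = m then 1 else 0)
    (hK : ∀ x ∈ s, ∀ N, ∫ y, |expansionKernel θ N x y| ∂ν ≤ C)
    {f : α → ℂ} (hf : Integrable f (ν.restrict s)) (n : ℕ) :
    Integrable (fun x => f x * θ n x) (ν.restrict s) := by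
  have hθ : ∀ n, Integrable (θ n) ν := fun n => (hθ2 n).integrable one_le_two
  have hθ0 : 0 < ∫ y, |θ n y| ∂ν :=
    integral_abs_pos_of_integral_mul_self_ne_zero (hθ n) (by simp [hortho])
  refine hf.mul_bdd (c := 2 * C / ∫ y, |θ n y| ∂ν) (hθ n).restrict.ofReal.aestronglyMeasurable ?_
  filter_upwards [ae_restrict_mem hs] with x hx
  rw [Complex.norm_real, Real.norm_eq_abs, le_div_iff₀ hθ0]
  exact abs_mul_integral_abs_le_of_kernel_bound hθ (hK x hx) n

theorem integral_norm_expansionPartialSum_restrict_le (hs : MeasurableSet s)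
    (hθ2 : ∀ n, MemLp (θ n) 2 ν)
    (hortho : ∀ n m, ∫ x, θ n x * θ m x ∂ν = if n = m then 1 else 0)
    (hK : ∀ x ∈ s, ∀ N, ∫ y, |expansionKernel θ N x y| ∂ν ≤ C)
    {f : α → ℂ} (hf : Integrable f (ν.restrict s)) (N : ℕ) :
    ∫ y, ‖expansionPartialSum θ (ν.restrict s) f N y‖ ∂ν ≤ C * ∫ x in s, ‖f x‖ ∂ν :=
  integral_norm_expansionPartialSum_le (fun n => (hθ2 n).integrable one_le_two) hf
    (integrable_mul_of_kernel_bound hs hθ2 hortho hK hf)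
    (ae_restrict_of_forall_mem hs fun x hx => hK x hx N)

theorem integral_norm_indicator_sub_expansionPartialSum_le (hs : MeasurableSet s)
    (hθ2 : ∀ n, MemLp (θ n) 2 ν)
    (hortho : ∀ n m, ∫ x, θ n x * θ m x ∂ν = if n = m then 1 else 0)
    (hK : ∀ x ∈ s, ∀ N, ∫ y, |expansionKernel θ N x y| ∂ν ≤ C)
    {f h : α → ℂ} (hf : Integrable f (ν.restrict s)) (hh : Integrable h (ν.restrict s)) (N : ℕ) :
    ∫ y, ‖s.indicator f y - expansionPartialSum θ (ν.restrict s) f N y‖ ∂ν ≤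
      ∫ x in s, ‖f x - h x‖ ∂ν + C * ∫ x in s, ‖f x - h x‖ ∂ν +
        ∫ y, ‖s.indicator h y - expansionPartialSum θ ν (s.indicator h) N y‖ ∂ν := by
  have hθ : ∀ n, Integrable (θ n) ν := fun n => (hθ2 n).integrable one_le_two
  have hsplit : ∀ y, s.indicator f y - expansionPartialSum θ (ν.restrict s) f N y =
      s.indicator (f - h) y + (expansionPartialSum θ (ν.restrict s) (h - f) N y +
        (s.indicator h y - expansionPartialSum θ ν (s.indicator h) N y)) := by
    intro y
    rw [expansionPartialSum_indicator hs, expansionPartialSum_sub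
      (integrable_mul_of_kernel_bound hs hθ2 hortho hK hh)
      (integrable_mul_of_kernel_bound hs hθ2 hortho hK hf), Set.indicator_sub']
    simp only [Pi.sub_apply]
    ring
  have hF := (integrable_indicator_iff hs).2 (hf.sub hh)
  have hU := integrable_expansionPartialSum (μ := ν.restrict s) (f := h - f) hθ N
  have hE := ((integrable_indicator_iff hs).2 hh).sub
    (integrable_expansionPartialSum (μ := ν) (f := s.indicator h) hθ N)
  have hF_norm : ∫ y, ‖s.indicator (f - h) y‖ ∂ν = ∫ x in s, ‖f x - h x‖ ∂ν := by
    simp only [norm_indicator_eq_indicator_norm, integral_indicator hs]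
    rfl
  have hU_norm : ∫ y, ‖expansionPartialSum θ (ν.restrict s) (h - f) N y‖ ∂ν ≤
      C * ∫ x in s, ‖f x - h x‖ ∂ν := by
    simpa only [Pi.sub_apply, norm_sub_rev] using
      integral_norm_expansionPartialSum_restrict_le hs hθ2 hortho hK (hh.sub hf) N
  simp only [hsplit]
  refine (integral_norm_add_le hF (hU.add hE)).trans
    ((add_le_add le_rfl (integral_norm_add_le hU hE)).trans ?_)
  rw [hF_norm, ← add_assoc]
  exact add_le_add (add_le_add le_rfl hU_norm) le_rfl

theorem tendsto_integral_norm_indicator_sub_expansionPartialSum (hs : MeasurableSet s)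
    (hθ2 : ∀ n, MemLp (θ n) 2 ν)
    (hortho : ∀ n m, ∫ x, θ n x * θ m x ∂ν = if n = m then 1 else 0)
    (hcomplete : ∀ g : α → ℂ, MemLp g 2 ν → (∀ n, ∫ x, g x * θ n x ∂ν = 0) → g =ᵐ[ν] 0)
    (hK : ∀ x ∈ s, ∀ N, ∫ y, |expansionKernel θ N x y| ∂ν ≤ C)
    {f : α → ℂ} (hf : Integrable f (ν.restrict s)) :
    Tendsto (fun N => ∫ y, ‖s.indicator f y - expansionPartialSum θ (ν.restrict s) f N y‖ ∂ν)
      atTop (𝓝 0) := by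
  refine tendsto_nhds_zero_of_forall_le_add (fun N => integral_nonneg fun _ => norm_nonneg _)
    fun ε hε => ?_
  obtain ⟨h, hh2, hfh⟩ :=
    hf.exists_memLp_two_integral_norm_sub_le (δ := ε / (1 + |C|)) (by positivity)
  refine ⟨_, tendsto_integral_norm_sub_expansionPartialSum hθ2 hortho hcomplete
    ((memLp_indicator_iff_restrict hs).2 hh2), fun N => ?_⟩
  have hd := (le_div_iff₀ (by positivity)).1 hfh
  have hCd := mul_le_mul_of_nonneg_right (le_abs_self C)
    (integral_nonneg fun x => norm_nonneg (f x - h x) : 0 ≤ ∫ x in s, ‖f x - h x‖ ∂ν)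
  linarith [integral_norm_indicator_sub_expansionPartialSum_le hs hθ2 hortho hK hf
    (hh2.integrable one_le_two) N]

end KernelBound

theorem stmt15_general (σ : ℝ) (hσπ : σ < Real.pi)
    (θhat : ℕ → ℝ → ℝ)
    (hθ2 : ∀ n, MemLp (θhat n) 2 (volume.restrict (Set.Icc (-Real.pi) Real.pi)))
    (hortho : ∀ n m : ℕ, (1 / (2 * Real.pi)) *
        (∫ ω in Set.Icc (-Real.pi) Real.pi, θhat n ω * θhat m ω) =
        if n = m then 1 else 0)
    (hcomplete : ∀ g : ℝ → ℂ, MemLp g 2 (volume.restrict (Set.Icc (-Real.pi) Real.pi)) →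
      (∀ n, (∫ ω in Set.Icc (-Real.pi) Real.pi, g ω * (θhat n ω : ℂ)) = 0) →
      g =ᵐ[volume.restrict (Set.Icc (-Real.pi) Real.pi)] 0)
    (C₀ : ℝ)
    (hC₀ : ∀ ω ∈ Set.Icc (-σ) σ, ∀ N : ℕ,
      (1 / (2 * Real.pi)) *
          (∫ ω₁ in Set.Icc (-Real.pi) Real.pi,
            |∑ n ∈ Finset.range N, θhat n ω * θhat n ω₁|) ≤ C₀)
    (fhat : ℝ → ℂ) (hf : IntegrableOn fhat (Set.Icc (-σ) σ)) :
    (∀ N : ℕ,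
      (1 / (2 * Real.pi)) *
          (∫ ω in Set.Icc (-Real.pi) Real.pi,
            ‖∑ n ∈ Finset.range N,
                ((1 / (2 * Real.pi)) * ∫ ω₁ in Set.Icc (-σ) σ, fhat ω₁ * (θhat n ω₁ : ℂ)) *
                  (θhat n ω : ℂ)‖) ≤
        C₀ * ((1 / (2 * Real.pi)) * ∫ ω in Set.Icc (-σ) σ, ‖fhat ω‖)) ∧
    Filter.Tendsto (fun N : ℕ =>
        (1 / (2 * Real.pi)) *
          ∫ ω in Set.Icc (-Real.pi) Real.pi,
            ‖(if ω ∈ Set.Icc (-σ) σ then fhat ω else 0) -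
                ∑ n ∈ Finset.range N,
                  ((1 / (2 * Real.pi)) * ∫ ω₁ in Set.Icc (-σ) σ, fhat ω₁ * (θhat n ω₁ : ℂ)) *
                    (θhat n ω : ℂ)‖)
      Filter.atTop (nhds 0) := by
  have hc : 0 < 1 / (2 * Real.pi) := by positivity
  set ν := ENNReal.ofReal (1 / (2 * Real.pi)) • volume.restrict (Set.Icc (-Real.pi) Real.pi)
    with hν
  have : IsFiniteMeasure ν := Measure.smul_finite _ ENNReal.ofReal_ne_top
  have hνs : ν.restrict (Set.Icc (-σ) σ) =
      ENNReal.ofReal (1 / (2 * Real.pi)) • volume.restrict (Set.Icc (-σ) σ) := by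
    rw [Measure.restrict_smul, Measure.restrict_restrict measurableSet_Icc,
      Set.inter_eq_left.2 (Set.Icc_subset_Icc (by linarith) hσπ.le)]
  have hθ2' : ∀ n, MemLp (θhat n) 2 ν := fun n => (hθ2 n).smul_measure ENNReal.ofReal_ne_top
  have hortho' : ∀ n m, ∫ x, θhat n x * θhat m x ∂ν = if n = m then 1 else 0 := by
    simpa only [hν, integral_ofReal_smul_measure hc.le, smul_eq_mul] using hortho
  have hcomplete' : ∀ g : ℝ → ℂ, MemLp g 2 ν → (∀ n, ∫ x, g x * θhat n x ∂ν = 0) →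
      g =ᵐ[ν] 0 := by
    intro g hg hg0
    refine Measure.ae_smul_measure (hcomplete g (hg.of_ofReal_smul_measure hc) fun n => ?_) _
    simpa only [hν, integral_ofReal_smul_measure hc.le, smul_eq_zero, hc.ne', false_or]
      using hg0 n
  have hK : ∀ x ∈ Set.Icc (-σ) σ, ∀ N, ∫ y, |expansionKernel θhat N x y| ∂ν ≤ C₀ := by
    simpa only [hν, integral_ofReal_smul_measure hc.le, smul_eq_mul, expansionKernel] using hC₀
  have hf' : Integrable fhat (ν.restrict (Set.Icc (-σ) σ)) :=
    hνs ▸ hf.smul_measure ENNReal.ofReal_ne_top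
  have h1 := integral_norm_expansionPartialSum_restrict_le measurableSet_Icc hθ2' hortho' hK hf'
  have h2 := tendsto_integral_norm_indicator_sub_expansionPartialSum measurableSet_Icc hθ2' hortho'
    hcomplete' hK hf'
  rw [hνs] at h1 h2
  simp only [expansionPartialSum, hν, integral_ofReal_smul_measure hc.le, smul_eq_mul,
    Complex.real_smul, Set.indicator_apply] at h1 h2
  push_cast at h1 h2
  exact ⟨h1, h2⟩

/-- let `0 < σ < π` and let `{θ̂_n}` be a complete orthonormal system of
real-valued functions in `L²[-π,π]` (inner product `(1/(2π))∫ u v̄`) for which there is a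
constant `C₀` with `(1/(2π)) ∫_{-π}^{π} |∑_{n<N} θ̂_n(ω) θ̂_n(ω₁)| dω₁ ≤ C₀` for all
`ω ∈ [-σ,σ]` and all `N`. Then for each `f ∈ PW¹_σ` (given by its integrable Fourier
transform `f̂` on `[-σ,σ]`, extended by zero), with `c_n(f) = (1/(2π))∫_{-σ}^{σ} f̂ θ̂_n`
and `U_N f̂ = ∑_{n<N} c_n(f) θ̂_n`:
(i) `(1/(2π)) ∫_{-π}^{π} |U_N f̂| ≤ C₀ ‖f‖_{PW¹_σ}` for all `N`, and
(ii) `(1/(2π)) ∫_{-π}^{π} |f̂ - U_N f̂| → 0` as `N → ∞`. -/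
theorem stmt15 (σ : ℝ) (hσ0 : 0 < σ) (hσπ : σ < Real.pi)
    (θhat : ℕ → ℝ → ℝ)
    (hθ2 : ∀ n, MemLp (θhat n) 2 (volume.restrict (Set.Icc (-Real.pi) Real.pi)))
    (hortho : ∀ n m : ℕ, (1 / (2 * Real.pi)) *
        (∫ ω in Set.Icc (-Real.pi) Real.pi, θhat n ω * θhat m ω) =
        if n = m then 1 else 0)
    (hcomplete : ∀ g : ℝ → ℂ, MemLp g 2 (volume.restrict (Set.Icc (-Real.pi) Real.pi)) →
      (∀ n, (∫ ω in Set.Icc (-Real.pi) Real.pi, g ω * (θhat n ω : ℂ)) = 0) →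
      g =ᵐ[volume.restrict (Set.Icc (-Real.pi) Real.pi)] 0)
    (C₀ : ℝ)
    (hC₀ : ∀ ω ∈ Set.Icc (-σ) σ, ∀ N : ℕ,
      (1 / (2 * Real.pi)) *
          (∫ ω₁ in Set.Icc (-Real.pi) Real.pi,
            |∑ n ∈ Finset.range N, θhat n ω * θhat n ω₁|) ≤ C₀)
    (fhat : ℝ → ℂ) (hf : IntegrableOn fhat (Set.Icc (-σ) σ)) :
    (∀ N : ℕ,
      (1 / (2 * Real.pi)) *
          (∫ ω in Set.Icc (-Real.pi) Real.pi,
            ‖∑ n ∈ Finset.range N,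
                ((1 / (2 * Real.pi)) * ∫ ω₁ in Set.Icc (-σ) σ, fhat ω₁ * (θhat n ω₁ : ℂ)) *
                  (θhat n ω : ℂ)‖) ≤
        C₀ * ((1 / (2 * Real.pi)) * ∫ ω in Set.Icc (-σ) σ, ‖fhat ω‖)) ∧
    Filter.Tendsto (fun N : ℕ =>
        (1 / (2 * Real.pi)) *
          ∫ ω in Set.Icc (-Real.pi) Real.pi,
            ‖(if ω ∈ Set.Icc (-σ) σ then fhat ω else 0) -
                ∑ n ∈ Finset.range N,
                  ((1 / (2 * Real.pi)) * ∫ ω₁ in Set.Icc (-σ) σ, fhat ω₁ * (θhat n ω₁ : ℂ)) *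
                    (θhat n ω : ℂ)‖)
      Filter.atTop (nhds 0) :=
  stmt15_general σ hσπ θhat hθ2 hortho hcomplete C₀ hC₀ fhat hf
end

section
/- For every strictly increasing sequence {M_N}_{N∈ℕ} of natural numbers there exist a signal f_* ∈ PW¹_π and ĥ_* ∈ L^∞[−π,π] (defining a stable LTI system T_* : PW¹_π → PW¹_π) such that limsup_{N→∞} sup_{t∈ℝ} | (T_* f_*)(t) − Σ_{k=−M_N}^{M_N} f_*(k) (T_* sinc(· − k))(t) | = ∞, where sinc(t) = sin(πt)/(πt) and (T_* sinc(· − k))(t) = (1/(2π)) ∫_{−π}^{π} ĥ_*(ω) e^{−iωk} e^{iωt} dω. -/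
/-!
Take `ĥ_* = 1`. For fixed `m` and `t`, the truncated sampling error
`f(t) - ∑_{|k| ≤ m} f(k) sinc(t - k)` is the continuous functional
`f̂ ↦ (1/2π) ∫ f̂ K_{m,t}` on `L¹[-π, π]`, with the bounded continuous kernel
`K_{m,t}(ω) = e^{iωt} - ∑_{|k| ≤ m} e^{iωk} sinc(t - k)`; testing it on normalized indicators of
short intervals at `π` shows that its norm is at least `(|K_{m,t}(π)| - 1) / 2π`.
At `t = m + 1/2` and `ω = π` every term of the sum equals `(-1)^m / (π (m + 1/2 - k))`, so
`|K_{m,t}(π)|` grows like the harmonic series. The functionals for `m = M_N` therefore have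
unbounded norms, and the Banach–Steinhaus theorem yields `f̂_* ∈ L¹` whose errors at
`t = M_N + 1/2` are unbounded in `N`.
-/

open MeasureTheory Filter Finset

open scoped ENNReal NNReal

local notation "μπ" => volume.restrict (Set.Icc (-Real.pi) Real.pi)

theorem limsup_coe_eq_top_of_not_bddAbove {u : ℕ → ℝ≥0} (hu : ¬ BddAbove (Set.range u)) :
    limsup (fun n => (u n : ℝ≥0∞)) atTop = ⊤ := by
  by_contra hne
  obtain ⟨b, hlt, hb⟩ := exists_between (lt_top_iff_ne_top.2 hne)
  refine hu (IsBoundedUnder.bddAbove_range ⟨b.toNNReal, ?_⟩)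
  filter_upwards [eventually_lt_of_limsup_lt hlt] with n hn
  exact ENNReal.coe_le_coe.1 (hn.le.trans_eq (ENNReal.coe_toNNReal hb.ne).symm)

theorem exists_limsup_nnnorm_apply_eq_top {𝕜 E F : Type*} [NontriviallyNormedField 𝕜]
    [NormedAddCommGroup E] [NormedSpace 𝕜 E] [CompleteSpace E] [NormedAddCommGroup F]
    [NormedSpace 𝕜 F] {φ : ℕ → E →L[𝕜] F} (hφ : ¬ BddAbove (Set.range fun n => ‖φ n‖)) :
    ∃ x, limsup (fun n => (‖φ n x‖₊ : ℝ≥0∞)) atTop = ⊤ := by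
  by_contra! h
  refine hφ ⟨_, Set.forall_mem_range.2 (banach_steinhaus fun x => ?_).choose_spec⟩
  by_contra! hx
  refine h x (limsup_coe_eq_top_of_not_bddAbove fun ⟨C, hC⟩ => ?_)
  obtain ⟨n, hn⟩ := hx C
  exact hn.not_ge (hC ⟨n, rfl⟩)

theorem ContinuousOn.memLp_top_restrict {α E : Type*} [MeasurableSpace α] [TopologicalSpace α]
    [OpensMeasurableSpace α] [NormedAddCommGroup E] {μ : Measure α} {s : Set α} {f : α → E}
    (hs : IsCompact s) (hsm : MeasurableSet s) (hf : ContinuousOn f s) :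
    MemLp f ⊤ (μ.restrict s) := by
  obtain ⟨C, hC⟩ := hs.exists_bound_of_continuousOn hf
  exact memLp_top_of_bound (hf.aestronglyMeasurable_of_isCompact hs hsm) C
    (ae_restrict_of_forall_mem hsm hC)

theorem norm_sub_le_norm_lpPairing_mul {𝕜 α : Type*} [RCLike 𝕜] [MeasurableSpace α]
    {μ : Measure α} (K : Lp 𝕜 ⊤ μ) {s : Set α} (hs : MeasurableSet s) (hμs₀ : μ s ≠ 0)
    (hμs : μ s ≠ ⊤) {c : 𝕜} {η : ℝ} (hK : ∀ᵐ x ∂μ, x ∈ s → ‖K x - c‖ ≤ η) :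
    ‖c‖ - η ≤ ‖(ContinuousLinearMap.mul 𝕜 𝕜).lpPairing μ ⊤ 1 K‖ := by
  set u := indicatorConstLp 1 hs hμs (1 : 𝕜)
  have hμs_pos : 0 < μ.real s := ENNReal.toReal_pos hμs₀ hμs
  have hu : ‖u‖ = μ.real s := by
    simp [u, norm_indicatorConstLp one_ne_zero ENNReal.one_ne_top, Measure.real]
  have hKu : (ContinuousLinearMap.mul 𝕜 𝕜).lpPairing μ ⊤ 1 K u = ∫ x in s, K x ∂μ := by
    rw [ContinuousLinearMap.lpPairing_eq_integral, ← integral_indicator hs]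
    refine integral_congr_ae ?_
    filter_upwards [indicatorConstLp_coeFn (p := 1) (hs := hs) (hμs := hμs) (c := (1 : 𝕜))]
      with x hx
    by_cases h : x ∈ s <;> simp [hx, h, u]
  have hsplit : ∫ x in s, K x ∂μ = μ.real s • c + ∫ x in s, (K x - c) ∂μ := by
    have : IsFiniteMeasure (μ.restrict s) := ⟨by simpa using hμs.lt_top⟩
    have hKs : IntegrableOn K s μ := ((Lp.memLp K).restrict s).integrable le_top
    rw [integral_sub hKs (integrableOn_const hμs), setIntegral_const]
    abel
  have hdev : ‖∫ x in s, (K x - c) ∂μ‖ ≤ η * μ.real s :=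
    norm_setIntegral_le_of_norm_le_const_ae' hμs.lt_top hK
  have hlow : μ.real s * (‖c‖ - η) ≤ ‖(ContinuousLinearMap.mul 𝕜 𝕜).lpPairing μ ⊤ 1 K u‖ := by
    rw [hKu, hsplit]
    calc μ.real s * (‖c‖ - η) ≤ ‖μ.real s • c‖ - ‖∫ x in s, (K x - c) ∂μ‖ := by
          rw [norm_smul, Real.norm_of_nonneg hμs_pos.le]
          linarith
      _ ≤ ‖μ.real s • c + ∫ x in s, (K x - c) ∂μ‖ := norm_sub_le_norm_add _ _
  have hup := ((ContinuousLinearMap.mul 𝕜 𝕜).lpPairing μ ⊤ 1 K).le_opNorm u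
  rw [hu] at hup
  exact le_of_mul_le_mul_left ((hlow.trans hup).trans_eq (mul_comm _ _)) hμs_pos

theorem norm_cexp_I_mul_ofReal_mul (ω c : ℝ) : ‖Complex.exp (Complex.I * ω * c)‖ = 1 := by
  rw [show Complex.I * ω * c = ((ω * c : ℝ) : ℂ) * Complex.I by push_cast; ring]
  exact Complex.norm_exp_ofReal_mul_I _

theorem integral_cexp_Icc_neg_pi_pi (a : ℝ) :
    (1 / (2 * Real.pi)) * ∫ ω in Set.Icc (-Real.pi) Real.pi, Complex.exp (Complex.I * ω * a)
      = Real.sinc (Real.pi * a) := by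
  have hπ : (Real.pi : ℂ) ≠ 0 := Complex.ofReal_ne_zero.2 Real.pi_ne_zero
  rw [integral_Icc_eq_integral_Ioc, ← intervalIntegral.integral_of_le (by linarith [Real.pi_pos])]
  rcases eq_or_ne a 0 with rfl | ha
  · simp [Real.sinc_zero]
    field_simp
    norm_num
  · have hc : Complex.I * a ≠ 0 := mul_ne_zero Complex.I_ne_zero (Complex.ofReal_ne_zero.2 ha)
    simp_rw [show ∀ ω : ℝ, Complex.I * ω * a = (Complex.I * a) * ω from fun ω => by ring]
    rw [integral_exp_mul_complex hc, Real.sinc_of_ne_zero (mul_ne_zero Real.pi_ne_zero ha)]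
    push_cast
    rw [Complex.sin]
    field_simp
    ring_nf
    rw [Complex.I_sq]
    ring

noncomputable def samplingKernel (m : ℕ) (t ω : ℝ) : ℂ :=
  Complex.exp (Complex.I * ω * t) -
    ∑ k ∈ Icc (-(m : ℤ)) m, Complex.exp (Complex.I * ω * (k : ℝ)) * Real.sinc (Real.pi * (t - k))

theorem continuous_samplingKernel (m : ℕ) (t : ℝ) : Continuous (samplingKernel m t) := by
  unfold samplingKernel
  fun_prop

theorem integrable_mul_cexp {g : ℝ → ℂ} (hg : Integrable g μπ) (c : ℝ) :
    Integrable (fun ω => g ω * Complex.exp (Complex.I * ω * c)) μπ :=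
  hg.mul_bdd (by fun_prop) (Eventually.of_forall fun ω => (norm_cexp_I_mul_ofReal_mul ω c).le)

theorem samplingError_eq_integral_mul_samplingKernel {g : ℝ → ℂ} (hg : Integrable g μπ)
    (m : ℕ) (t : ℝ) :
    ((1 / (2 * Real.pi)) *
        ∫ ω in Set.Icc (-Real.pi) Real.pi, g ω * Complex.exp (Complex.I * ω * t))
      - ∑ k ∈ Icc (-(m : ℤ)) m,
          ((1 / (2 * Real.pi)) *
              ∫ ω in Set.Icc (-Real.pi) Real.pi, g ω * Complex.exp (Complex.I * ω * (k : ℝ))) *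
            ((1 / (2 * Real.pi)) *
              ∫ ω in Set.Icc (-Real.pi) Real.pi,
                Complex.exp (-(Complex.I * ω * (k : ℝ))) * Complex.exp (Complex.I * ω * t))
      = (1 / (2 * Real.pi)) * ∫ ω in Set.Icc (-Real.pi) Real.pi, g ω * samplingKernel m t ω := by
  have hsinc : ∀ k : ℤ, (1 / (2 * Real.pi)) * ∫ ω in Set.Icc (-Real.pi) Real.pi,
      Complex.exp (-(Complex.I * ω * (k : ℝ))) * Complex.exp (Complex.I * ω * t)
        = Real.sinc (Real.pi * (t - k)) := fun k => by
    rw [← integral_cexp_Icc_neg_pi_pi]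
    congr 2 with ω
    rw [← Complex.exp_add]
    push_cast
    ring_nf
  have hint : ∀ k ∈ Icc (-(m : ℤ)) m, Integrable (fun ω =>
      g ω * Complex.exp (Complex.I * ω * (k : ℝ)) * Real.sinc (Real.pi * (t - k))) μπ :=
    fun k _ => (integrable_mul_cexp hg k).mul_const _
  have hK : ∫ ω in Set.Icc (-Real.pi) Real.pi, g ω * samplingKernel m t ω
      = (∫ ω in Set.Icc (-Real.pi) Real.pi, g ω * Complex.exp (Complex.I * ω * t))
        - ∑ k ∈ Icc (-(m : ℤ)) m,
          (∫ ω in Set.Icc (-Real.pi) Real.pi, g ω * Complex.exp (Complex.I * ω * (k : ℝ)))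
            * Real.sinc (Real.pi * (t - k)) := by
    simp_rw [samplingKernel, mul_sub (g _), mul_sum, ← mul_assoc]
    rw [integral_sub (integrable_mul_cexp hg t) (integrable_finsetSum _ hint),
      integral_finsetSum _ hint]
    simp only [integral_mul_const]
  rw [hK, mul_sub, mul_sum]
  refine congrArg _ (sum_congr rfl fun k _ => ?_)
  rw [hsinc]
  ring

theorem cexp_pi_mul_sinc_half_sub (m : ℕ) (k : ℤ) :
    Complex.exp (Complex.I * Real.pi * (k : ℝ)) * Real.sinc (Real.pi * (m + 1 / 2 - k))
      = (-1) ^ m * ((1 / (Real.pi * (m + 1 / 2 - k)) : ℝ) : ℂ) := by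
  have hne : Real.pi * (m + 1 / 2 - k) ≠ 0 := by
    refine mul_ne_zero Real.pi_ne_zero fun h => ?_
    have : (2 * k : ℝ) = ((2 * m + 1 : ℤ) : ℝ) := by push_cast; linarith
    exact_mod_cast (by omega : (2 * k : ℤ) ≠ 2 * m + 1) (by exact_mod_cast this)
  have hexp : Complex.exp (Complex.I * Real.pi * (k : ℝ)) = (-1) ^ k := by
    rw [show Complex.I * Real.pi * (k : ℝ) = k * (Real.pi * Complex.I) by push_cast; ring,
      Complex.exp_int_mul, Complex.exp_pi_mul_I]
  have hsin : Real.sin (Real.pi * (m + 1 / 2 - k)) = (-1) ^ ((m : ℤ) - k) := by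
    rw [show Real.pi * (m + 1 / 2 - k) = Real.pi / 2 + (((m : ℤ) - k : ℤ) : ℝ) * Real.pi by
      push_cast; ring, Real.sin_add_int_mul_pi, Real.sin_pi_div_two, mul_one]
  rw [hexp, Real.sinc_of_ne_zero hne, hsin, div_eq_mul_one_div, Complex.ofReal_mul,
    ← mul_assoc]
  push_cast
  rw [← zpow_add₀ (by norm_num), add_sub_cancel, zpow_natCast]

theorem sum_Icc_one_div_half_sub (m : ℕ) :
    ∑ k ∈ Icc (-(m : ℤ)) m, 1 / ((m : ℝ) + 1 / 2 - k)
      = ∑ j ∈ range (2 * m + 1), 1 / ((j : ℝ) + 1 / 2) := by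
  refine sum_nbij' (fun k => (m - k).toNat) (fun j => m - j) ?_ ?_ ?_ ?_ fun k hk => ?_
  all_goals try (intro x hx; simp only [mem_Icc, mem_range] at hx ⊢; omega)
  rw [mem_Icc] at hk
  rw [show (((m - k).toNat : ℕ) : ℝ) = m - k by exact_mod_cast Int.toNat_of_nonneg (by omega)]
  ring_nf

theorem sum_range_one_div_succ_div_pi_sub_one_le_norm_samplingKernel (m : ℕ) :
    (∑ j ∈ range (2 * m + 1), 1 / ((j : ℝ) + 1)) / Real.pi - 1
      ≤ ‖samplingKernel m (m + 1 / 2) Real.pi‖ := by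
  set S := ∑ k ∈ Icc (-(m : ℤ)) m,
    Complex.exp (Complex.I * Real.pi * (k : ℝ)) * Real.sinc (Real.pi * (m + 1 / 2 - k))
  have hS : ‖S‖ = 1 / Real.pi * ∑ j ∈ range (2 * m + 1), 1 / ((j : ℝ) + 1 / 2) := by
    have hsum : S = (-1) ^ m
        * ((1 / Real.pi * ∑ j ∈ range (2 * m + 1), 1 / ((j : ℝ) + 1 / 2) : ℝ) : ℂ) := by
      simp only [S, cexp_pi_mul_sinc_half_sub, ← sum_Icc_one_div_half_sub, mul_sum,
        one_div_mul_one_div, Complex.ofReal_sum]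
    rw [hsum, norm_mul, norm_pow, norm_neg, norm_one, one_pow, one_mul, Complex.norm_real,
      Real.norm_of_nonneg (by positivity)]
  calc (∑ j ∈ range (2 * m + 1), 1 / ((j : ℝ) + 1)) / Real.pi - 1
      ≤ 1 / Real.pi * ∑ j ∈ range (2 * m + 1), 1 / ((j : ℝ) + 1 / 2) - 1 := by
        rw [← one_div_mul_eq_div]
        gcongr
        norm_num
    _ = ‖S‖ - ‖Complex.exp (Complex.I * Real.pi * (m + 1 / 2 : ℝ))‖ := by
        rw [hS, norm_cexp_I_mul_ofReal_mul]
    _ ≤ ‖samplingKernel m (m + 1 / 2) Real.pi‖ := by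
        rw [samplingKernel, norm_sub_rev]
        exact norm_sub_norm_le _ _

theorem tendsto_norm_samplingKernel_pi :
    Tendsto (fun m : ℕ => ‖samplingKernel m (m + 1 / 2) Real.pi‖) atTop atTop := by
  refine tendsto_atTop_mono sum_range_one_div_succ_div_pi_sub_one_le_norm_samplingKernel ?_
  have hlen : Tendsto (fun m : ℕ => 2 * m + 1) atTop atTop :=
    tendsto_atTop_mono (fun m => show m ≤ 2 * m + 1 by omega) tendsto_id
  simpa only [sub_eq_add_neg, Function.comp_def] using tendsto_atTop_add_const_right _ (-1)
    ((Real.tendsto_sum_range_one_div_nat_succ_atTop.comp hlen).atTop_div_const Real.pi_pos)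

theorem memLp_top_samplingKernel (m : ℕ) (t : ℝ) : MemLp (samplingKernel m t) ⊤ μπ :=
  (continuous_samplingKernel m t).continuousOn.memLp_top_restrict isCompact_Icc measurableSet_Icc

noncomputable def samplingErrorFunctional (m : ℕ) (t : ℝ) : Lp ℂ 1 μπ →L[ℂ] ℂ :=
  (1 / (2 * Real.pi) : ℂ) •
    (ContinuousLinearMap.mul ℂ ℂ).lpPairing μπ ⊤ 1 ((memLp_top_samplingKernel m t).toLp _)

theorem samplingErrorFunctional_apply (m : ℕ) (t : ℝ) (g : Lp ℂ 1 μπ) :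
    samplingErrorFunctional m t g
      = (1 / (2 * Real.pi)) * ∫ ω in Set.Icc (-Real.pi) Real.pi, g ω * samplingKernel m t ω := by
  rw [samplingErrorFunctional, smul_apply,
    ContinuousLinearMap.lpPairing_eq_integral, smul_eq_mul]
  congr 1
  refine integral_congr_ae ?_
  filter_upwards [(memLp_top_samplingKernel m t).coeFn_toLp] with ω hω
  rw [ContinuousLinearMap.mul_apply', hω, mul_comm]

theorem le_norm_samplingErrorFunctional (m : ℕ) (t : ℝ) :
    (‖samplingKernel m t Real.pi‖ - 1) / (2 * Real.pi) ≤ ‖samplingErrorFunctional m t‖ := by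
  obtain ⟨δ, hδ, hK⟩ := Metric.continuousAt_iff.1
    ((continuous_samplingKernel m t).continuousAt (x := Real.pi)) 1 one_pos
  set ε := min δ (2 * Real.pi)
  have hε : 0 < ε := lt_min hδ Real.two_pi_pos
  have hsub : Set.Ioo (Real.pi - ε) Real.pi ⊆ Set.Icc (-Real.pi) Real.pi := fun ω hω =>
    ⟨by linarith [hω.1, min_le_right δ (2 * Real.pi)], hω.2.le⟩
  have hμ : μπ (Set.Ioo (Real.pi - ε) Real.pi) = ENNReal.ofReal ε := by
    rw [Measure.restrict_apply measurableSet_Ioo, Set.inter_eq_left.2 hsub, Real.volume_Ioo]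
    ring_nf
  have hpair := norm_sub_le_norm_lpPairing_mul ((memLp_top_samplingKernel m t).toLp _)
    (s := Set.Ioo (Real.pi - ε) Real.pi) measurableSet_Ioo
    (by rw [hμ]; exact (ENNReal.ofReal_pos.2 hε).ne') (by rw [hμ]; exact ENNReal.ofReal_ne_top)
    (c := samplingKernel m t Real.pi) (η := 1)
    (by
      filter_upwards [(memLp_top_samplingKernel m t).coeFn_toLp] with ω hω hωs
      rw [hω, ← dist_eq_norm]
      refine (hK ?_).le
      rw [Real.dist_eq, abs_sub_lt_iff]
      constructor <;> linarith [hωs.1, hωs.2, min_le_left δ (2 * Real.pi)])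
  have h2π : ‖(1 / (2 * Real.pi) : ℂ)‖ = 1 / (2 * Real.pi) := by
    rw [show (1 / (2 * Real.pi) : ℂ) = ((1 / (2 * Real.pi) : ℝ) : ℂ) by push_cast; rfl,
      Complex.norm_real, Real.norm_of_nonneg (by positivity)]
  rw [samplingErrorFunctional, norm_smul, h2π, one_div_mul_eq_div]
  exact div_le_div_of_nonneg_right hpair Real.two_pi_pos.le

/-- for every strictly increasing sequence `{M_N}` of natural numbers there
exist a signal `f_* ∈ PW¹_π` (given by its integrable Fourier transform `f̂_*` on
`[-π,π]`) and a stable LTI system `ĥ_* ∈ L^∞[-π,π]` such that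
`limsup_N sup_t |(T_* f_*)(t) − ∑_{k=-M_N}^{M_N} f_*(k) (T_* sinc(·−k))(t)| = ∞`,
where `f_*(k) = (1/(2π))∫ f̂_*(ω) e^{iωk} dω`,
`(T_* f_*)(t) = (1/(2π))∫ f̂_*(ω) ĥ_*(ω) e^{iωt} dω` and
`(T_* sinc(·−k))(t) = (1/(2π))∫ ĥ_*(ω) e^{-iωk} e^{iωt} dω`. -/
theorem stmt16 (M : ℕ → ℕ) (hM : StrictMono M) :
    ∃ fstarhat : ℝ → ℂ,
      IntegrableOn fstarhat (Set.Icc (-Real.pi) Real.pi) ∧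
      ∃ hstar : ℝ → ℂ,
        MemLp hstar ⊤ (volume.restrict (Set.Icc (-Real.pi) Real.pi)) ∧
        Filter.limsup (fun N : ℕ =>
            ⨆ t : ℝ,
              (‖((1 / (2 * Real.pi)) *
                    ∫ ω in Set.Icc (-Real.pi) Real.pi,
                      fstarhat ω * hstar ω * Complex.exp (Complex.I * ω * t)) -
                  ∑ k ∈ Finset.Icc (-(M N : ℤ)) ((M N : ℤ)),
                    ((1 / (2 * Real.pi)) *
                        ∫ ω in Set.Icc (-Real.pi) Real.pi,
                          fstarhat ω * Complex.exp (Complex.I * ω * (k : ℝ))) *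
                      ((1 / (2 * Real.pi)) *
                          ∫ ω in Set.Icc (-Real.pi) Real.pi,
                            hstar ω * Complex.exp (-(Complex.I * ω * (k : ℝ))) *
                              Complex.exp (Complex.I * ω * t))‖₊ : ENNReal))
          Filter.atTop = ⊤ := by
  have hφ : Tendsto (fun N => ‖samplingErrorFunctional (M N) (M N + 1 / 2)‖) atTop atTop :=
    tendsto_atTop_mono (fun N => le_norm_samplingErrorFunctional _ _)
      ((tendsto_atTop_add_const_right _ (-1)
        (tendsto_norm_samplingKernel_pi.comp hM.tendsto_atTop)).atTop_div_const Real.two_pi_pos)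
  obtain ⟨g, hg⟩ := exists_limsup_nnnorm_apply_eq_top (not_bddAbove_of_tendsto_atTop hφ)
  refine ⟨g, L1.integrable_coeFn g, fun _ => 1, memLp_top_const 1, top_unique ?_⟩
  rw [← hg]
  refine limsup_le_limsup (Eventually.of_forall fun N => ?_)
  refine le_trans ?_ (le_iSup _ ((M N : ℝ) + 1 / 2))
  simp only [mul_one, one_mul]
  rw [samplingError_eq_integral_mul_samplingKernel (L1.integrable_coeFn g),
    ← samplingErrorFunctional_apply]
end
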